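/- arXiv:1702.06282 — 7 statements merged into one kernel-verified Lean document; each statement's English description precedes it below -/
import Mathlib

section
/- Let u : E → ℝ be measurable with P_t|u|(x) < ∞ for every t ≥ 0 and x ∈ E. Then for every x ∈ E, Var^{ℙ^x}((u(X_t))_{t≥0}) = V(u)(x). -/
open MeasureTheory ProbabilityTheory ENNReal Filter
open scoped NNReal

/-- A sub-Markovian semigroup of kernels on a measurable space `E`. -/
structure SubMarkovSemigroup (E : Type*) [MeasurableSpace E] where
  P : ℝ≥0 → Kernel E E
  subMarkov : ∀ t x, P t x Set.univ ≤ 1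
  map_zero : ∀ (f : E → ℝ≥0∞), Measurable f → ∀ x, ∫⁻ y, f y ∂(P 0 x) = f x
  map_add : ∀ (t s : ℝ≥0) (f : E → ℝ≥0∞), Measurable f → ∀ x,
      ∫⁻ y, f y ∂(P (t + s) x) = ∫⁻ y, ∫⁻ z, f z ∂(P s y) ∂(P t x)

/-- Action of the time-`t` kernel on real-valued functions: `P_t f = P_t f⁺ - P_t f⁻`. -/
noncomputable def SubMarkovSemigroup.act {E : Type*} [MeasurableSpace E]
    (S : SubMarkovSemigroup E) (t : ℝ≥0) (f : E → ℝ) (x : E) : ℝ :=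
  ∫ y, f y ∂(S.P t x)

/-- A finite partition `0 = t_0 ≤ t_1 ≤ … ≤ t_n < ∞` of `ℝ₊`. -/
structure FinPartition where
  n : ℕ
  t : Fin (n + 1) → ℝ≥0
  mono : Monotone t
  first : t 0 = 0

/-- `V_τ(u) = Σ_{i=1}^n P_{t_{i-1}} |u - P_{t_i - t_{i-1}} u| + P_{t_n}|u|`. -/
noncomputable def SubMarkovSemigroup.V {E : Type*} [MeasurableSpace E]
    (S : SubMarkovSemigroup E) (u : E → ℝ) (τ : FinPartition) (x : E) : ℝ :=
  (∑ i : Fin τ.n, S.act (τ.t i.castSucc)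
      (fun y => |u y - S.act (τ.t i.succ - τ.t i.castSucc) u y|) x)
  + S.act (τ.t (Fin.last τ.n)) (fun y => |u y|) x

/-- The quasimartingale variation `Var^ℙ(Z)` of a process `Z`. -/
noncomputable def quasiVar {Ω : Type*} {mΩ : MeasurableSpace Ω}
    (𝒢 : Filtration ℝ≥0 mΩ) (Pr : Measure Ω) (Z : ℝ≥0 → Ω → ℝ) : ℝ≥0∞ :=
  ⨆ τ : FinPartition, ENNReal.ofReal (∫ ω,
    ((∑ i : Fin τ.n,
        |(Pr[(fun ω' => Z (τ.t i.succ) ω' - Z (τ.t i.castSucc) ω') | 𝒢 (τ.t i.castSucc)]) ω|)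
      + |Z (τ.t (Fin.last τ.n)) ω|) ∂Pr)

namespace SubMarkovSemigroup

variable {E : Type*} [MeasurableSpace E] (S : SubMarkovSemigroup E)

instance instIsFiniteKernelP (t : ℝ≥0) : IsFiniteKernel (S.P t) :=
  ⟨1, one_lt_top, fun x => S.subMarkov t x⟩

theorem measurable_act (t : ℝ≥0) {f : E → ℝ} (hf : Measurable f) :
    Measurable (S.act t f) := by
  have : StronglyMeasurable fun y => ∫ z, (fun p : E × E => f p.2) (y, z) ∂(S.P t y) :=
    StronglyMeasurable.integral_kernel_prod_right'
      ((hf.comp measurable_snd).stronglyMeasurable)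
  exact this.measurable

theorem integrable_act (s t : ℝ≥0) (x : E) {f : E → ℝ} (hf : Measurable f)
    (hint : Integrable f (S.P (s + t) x)) : Integrable (S.act t f) (S.P s x) := by
  refine ⟨(S.measurable_act t hf).aestronglyMeasurable, ?_⟩
  have key : ∫⁻ y, ‖S.act t f y‖₊ ∂(S.P s x)
      ≤ ∫⁻ y, ∫⁻ z, ‖f z‖₊ ∂(S.P t y) ∂(S.P s x) :=
    lintegral_mono fun y => enorm_integral_le_lintegral_enorm _
  rw [← S.map_add s t (fun z => (‖f z‖₊ : ℝ≥0∞)) hf.enorm x] at key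
  exact lt_of_le_of_lt key hint.2

end SubMarkovSemigroup

/-- If `u : E → ℝ` is measurable with `P_t|u|(x) < ∞` for all `t, x`
(i.e. `u` is integrable w.r.t. every kernel measure `P_t(x,·)`), then for every `x`,
the quasimartingale variation of `(u(X_t))_{t ≥ 0}` under `ℙ^x` equals
`V(u)(x) = sup_τ V_τ(u)(x)`. -/
theorem statement0 {E : Type*} [MeasurableSpace E] (S : SubMarkovSemigroup E)
    {Ω : Type*} {mΩ : MeasurableSpace Ω} (𝒢 : Filtration ℝ≥0 mΩ)
    (X : ℝ≥0 → Ω → E) (Px : E → Measure Ω)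
    (hAdapted : ∀ t : ℝ≥0, @Measurable Ω E (𝒢 t) _ (X t))
    (hProb : ∀ x, IsProbabilityMeasure (Px x))
    (hStart : ∀ x, Px x {ω | X 0 ω = x} = 1)
    (hMarkov : ∀ (s t : ℝ≥0) (f : E → ℝ), Measurable f →
      (∀ x : E, Integrable f (S.P t x)) → ∀ x : E,
      (Px x)[(fun ω => f (X (s + t) ω)) | 𝒢 s] =ᵐ[Px x] fun ω => S.act t f (X s ω))
    (u : E → ℝ) (hu : Measurable u)
    (hint : ∀ (t : ℝ≥0) (x : E), Integrable u (S.P t x)) (x : E) :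
    quasiVar 𝒢 (Px x) (fun t ω => u (X t ω))
      = ⨆ τ : FinPartition, ENNReal.ofReal (S.V u τ x) := by
  classical
  haveI := hProb x
  have hX : ∀ t : ℝ≥0, Measurable (X t) := fun t => (hAdapted t).mono (𝒢.le t) le_rfl
  -- a.e. starting point identity for measurable real functions
  have hae0 : ∀ (g : E → ℝ), Measurable g →
      (fun ω => g (X 0 ω)) =ᵐ[Px x] fun _ => g x := by
    intro g hg
    have hmeas : MeasurableSet {ω | g (X 0 ω) = g x} :=
      (hg.comp (hX 0)) (measurableSet_singleton (g x))
    have h1 : Px x {ω | g (X 0 ω) = g x} = 1 := by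
      refine le_antisymm prob_le_one ?_
      calc (1 : ℝ≥0∞) = Px x {ω | X 0 ω = x} := (hStart x).symm
        _ ≤ _ := measure_mono fun ω (h : X 0 ω = x) => by
          simp only [Set.mem_setOf_eq, h]
    have hset : {ω | ¬ g (X 0 ω) = g x} = {ω | g (X 0 ω) = g x}ᶜ := rfl
    rw [Filter.EventuallyEq, ae_iff]
    rw [hset, measure_compl hmeas (measure_ne_top _ _), h1, measure_univ, tsub_self]
  -- the law of `X t` under `Px x` is `P t x`
  have hmap : ∀ t : ℝ≥0, Measure.map (X t) (Px x) = S.P t x := by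
    intro t
    refine Measure.ext fun A hA => ?_
    set f : E → ℝ := A.indicator fun _ => 1 with hf_def
    have hfm : Measurable f := measurable_const.indicator hA
    have hfi : ∀ y : E, Integrable f (S.P t y) := fun y => (integrable_const 1).indicator hA
    have h := hMarkov 0 t f hfm hfi x
    rw [zero_add] at h
    have hXtA : (fun ω => f (X t ω)) = (X t ⁻¹' A).indicator fun _ => (1 : ℝ) := by
      ext ω; by_cases hω : X t ω ∈ A <;> simp [hf_def, Set.indicator, hω]
    have hIeq : ∫ ω, f (X t ω) ∂(Px x) = ∫ ω, S.act t f (X 0 ω) ∂(Px x) := by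
      rw [← integral_condExp (𝒢.le 0) (μ := Px x) (f := fun ω => f (X t ω))]
      exact integral_congr_ae h
    rw [integral_congr_ae (hae0 _ (S.measurable_act t hfm)), integral_const,
      probReal_univ, one_smul] at hIeq
    rw [hXtA, integral_indicator_const (1 : ℝ) ((hX t) hA)] at hIeq
    have hact : S.act t f x = (S.P t x A).toReal • (1 : ℝ) := by
      rw [SubMarkovSemigroup.act, hf_def, integral_indicator_const (1 : ℝ) hA, Measure.real]
    rw [hact, smul_eq_mul, mul_one, smul_eq_mul, mul_one] at hIeq
    rw [Measure.map_apply (hX t) hA]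
    exact (ENNReal.toReal_eq_toReal_iff' (measure_ne_top _ _) (measure_ne_top _ _)).mp hIeq
  have hInt_comp : ∀ (t : ℝ≥0) (g : E → ℝ), Measurable g → Integrable g (S.P t x) →
      Integrable (fun ω => g (X t ω)) (Px x) := by
    intro t g hg hgi
    rw [← hmap t] at hgi
    exact (integrable_map_measure hg.aestronglyMeasurable (hX t).aemeasurable).mp hgi
  have hInt_eq : ∀ (t : ℝ≥0) (g : E → ℝ), Measurable g →
      ∫ ω, g (X t ω) ∂(Px x) = ∫ y, g y ∂(S.P t x) := by
    intro t g hg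
    rw [← hmap t, integral_map (hX t).aemeasurable hg.aestronglyMeasurable]
  unfold quasiVar
  refine iSup_congr fun τ => congrArg ENNReal.ofReal ?_
  -- conditional expectation identities
  have hce : ∀ i : Fin τ.n,
      (Px x)[(fun ω' => u (X (τ.t i.succ) ω') - u (X (τ.t i.castSucc) ω')) |
          𝒢 (τ.t i.castSucc)]
        =ᵐ[Px x] fun ω => S.act (τ.t i.succ - τ.t i.castSucc) u (X (τ.t i.castSucc) ω)
          - u (X (τ.t i.castSucc) ω) := by
    intro i
    have hsr : τ.t i.castSucc + (τ.t i.succ - τ.t i.castSucc) = τ.t i.succ :=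
      add_tsub_cancel_of_le (τ.mono i.castSucc_le_succ)
    have h1 := hMarkov (τ.t i.castSucc) (τ.t i.succ - τ.t i.castSucc) u hu
      (fun y => hint _ y) x
    rw [hsr] at h1
    have hIr : Integrable (fun ω => u (X (τ.t i.succ) ω)) (Px x) :=
      hInt_comp _ u hu (hint _ x)
    have hIs : Integrable (fun ω => u (X (τ.t i.castSucc) ω)) (Px x) :=
      hInt_comp _ u hu (hint _ x)
    have h2 : (Px x)[(fun ω => u (X (τ.t i.castSucc) ω)) | 𝒢 (τ.t i.castSucc)]
        = fun ω => u (X (τ.t i.castSucc) ω) :=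
      condExp_of_stronglyMeasurable (𝒢.le _)
        ((hu.comp (hAdapted _)).stronglyMeasurable) hIs
    have h3 := condExp_sub (m := 𝒢 (τ.t i.castSucc)) (μ := Px x) hIr hIs
    refine h3.trans ?_
    exact h1.sub (Filter.EventuallyEq.of_eq h2)
  -- integrability of all the summands
  have hFint : ∀ i : Fin τ.n, Integrable (fun ω =>
      |((Px x)[(fun ω' => u (X (τ.t i.succ) ω') - u (X (τ.t i.castSucc) ω')) |
        𝒢 (τ.t i.castSucc)]) ω|) (Px x) := fun i => integrable_condExp.abs
  have hGint : Integrable (fun ω => |u (X (τ.t (Fin.last τ.n)) ω)|) (Px x) :=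
    (hInt_comp _ u hu (hint _ x)).abs
  rw [integral_add (integrable_finset_sum _ fun i _ => hFint i) hGint,
    integral_finset_sum _ fun i _ => hFint i]
  rw [SubMarkovSemigroup.V]
  congr 1
  · refine Finset.sum_congr rfl fun i _ => ?_
    have habs : (fun ω =>
        |((Px x)[(fun ω' => u (X (τ.t i.succ) ω') - u (X (τ.t i.castSucc) ω')) |
          𝒢 (τ.t i.castSucc)]) ω|)
        =ᵐ[Px x] fun ω => (fun y => |u y - S.act (τ.t i.succ - τ.t i.castSucc) u y|)
          (X (τ.t i.castSucc) ω) :=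
      (hce i).mono fun ω h => by simp only [h, abs_sub_comm]
    rw [integral_congr_ae habs,
      hInt_eq _ (fun y => |u y - S.act (τ.t i.succ - τ.t i.castSucc) u y|) ((hu.sub (S.measurable_act _ hu)).abs)]
    rfl
  · rw [hInt_eq _ (fun y => |u y|) hu.abs]
    rfl
end

section
/- Let u : E → ℝ be measurable with P_t|u| < ∞ pointwise for all t ≥ 0, let u₁, u₂ be supermedian functions for (P_t), set A := {u₁ + u₂ < ∞}, and assume u = u₁ − u₂ on A. Then V(u) ≤ u₁ + u₂ on A. -/
open MeasureTheory ProbabilityTheory ENNReal Filter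
open scoped NNReal

/-- A `[0,∞]`-valued measurable function `g` is supermedian for `(P_t)` if `P_t g ≤ g`
pointwise for all `t ≥ 0`. -/
def SubMarkovSemigroup.IsSupermedian {E : Type*} [MeasurableSpace E]
    (S : SubMarkovSemigroup E) (g : E → ℝ≥0∞) : Prop :=
  Measurable g ∧ ∀ (t : ℝ≥0) (x : E), ∫⁻ y, g y ∂(S.P t x) ≤ g x

/-- Telescoping sum bound in `ℝ≥0∞`. -/
lemma aux_telescope (a : ℕ → ℝ≥0∞) (h : ∀ i, a (i + 1) ≤ a i) (n : ℕ) :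
    ∑ i ∈ Finset.range n, (a i - a (i + 1)) + a n ≤ a 0 := by
  induction n with
  | zero => simp
  | succ n ih =>
    rw [Finset.sum_range_succ, add_assoc, tsub_add_cancel_of_le (h n)]
    exact ih

lemma aux_ofReal_sum_le {α : Type*} (s : Finset α) (f : α → ℝ) :
    ENNReal.ofReal (∑ i ∈ s, f i) ≤ ∑ i ∈ s, ENNReal.ofReal (f i) := by
  classical
  induction s using Finset.induction with
  | empty => simp
  | insert _ _ h ih =>
    rw [Finset.sum_insert h, Finset.sum_insert h]
    exact (ENNReal.ofReal_add_le).trans (add_le_add_right ih _)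

/-- Key pointwise bound: `|u - P_s u|(y) ≤ g(y) - P_s g(y)` where `g = u₁ + u₂`, at
points where `g` is finite. -/
lemma aux_key {E : Type*} [MeasurableSpace E] (S : SubMarkovSemigroup E)
    (u : E → ℝ) (u₁ u₂ : E → ℝ≥0∞) (h₁ : S.IsSupermedian u₁) (h₂ : S.IsSupermedian u₂)
    (hdiff : ∀ x : E, u₁ x + u₂ x < ∞ → u x = (u₁ x).toReal - (u₂ x).toReal)
    (s : ℝ≥0) (y : E) (hy : u₁ y + u₂ y < ∞) :
    ENNReal.ofReal |u y - S.act s u y| ≤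
      (u₁ y + u₂ y) - ∫⁻ z, (u₁ z + u₂ z) ∂(S.P s y) := by
  set μ := S.P s y with hμ
  have hy1 : u₁ y ≠ ∞ := ((le_add_right le_rfl).trans_lt hy).ne
  have hy2 : u₂ y ≠ ∞ := ((le_add_left le_rfl).trans_lt hy).ne
  have hb1 : ∫⁻ z, u₁ z ∂μ ≤ u₁ y := h₁.2 s y
  have hb2 : ∫⁻ z, u₂ z ∂μ ≤ u₂ y := h₂.2 s y
  have hb1' : ∫⁻ z, u₁ z ∂μ ≠ ∞ := (hb1.trans_lt hy1.lt_top).ne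
  have hb2' : ∫⁻ z, u₂ z ∂μ ≠ ∞ := (hb2.trans_lt hy2.lt_top).ne
  have hgadd : ∫⁻ z, (u₁ z + u₂ z) ∂μ = ∫⁻ z, u₁ z ∂μ + ∫⁻ z, u₂ z ∂μ :=
    lintegral_add_left h₁.1 _
  have hae : ∀ᵐ z ∂μ, u₁ z + u₂ z < ∞ := by
    refine ae_lt_top (h₁.1.add h₂.1) ?_
    rw [hgadd]
    exact ENNReal.add_ne_top.2 ⟨hb1', hb2'⟩
  have hint1 : Integrable (fun z => (u₁ z).toReal) μ :=
    integrable_toReal_of_lintegral_ne_top h₁.1.aemeasurable hb1'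
  have hint2 : Integrable (fun z => (u₂ z).toReal) μ :=
    integrable_toReal_of_lintegral_ne_top h₂.1.aemeasurable hb2'
  have hact : S.act s u y = (∫⁻ z, u₁ z ∂μ).toReal - (∫⁻ z, u₂ z ∂μ).toReal := by
    rw [SubMarkovSemigroup.act, ← hμ,
      integral_congr_ae (hae.mono fun z hz => hdiff z hz),
      integral_sub hint1 hint2,
      integral_toReal h₁.1.aemeasurable (ae_lt_top h₁.1 hb1'),
      integral_toReal h₂.1.aemeasurable (ae_lt_top h₂.1 hb2')]
  set a1 := (u₁ y).toReal
  set a2 := (u₂ y).toReal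
  set b1 := (∫⁻ z, u₁ z ∂μ).toReal
  set b2 := (∫⁻ z, u₂ z ∂μ).toReal
  have hle1 : b1 ≤ a1 := ENNReal.toReal_mono hy1 hb1
  have hle2 : b2 ≤ a2 := ENNReal.toReal_mono hy2 hb2
  have habs : |u y - S.act s u y| ≤ (a1 - b1) + (a2 - b2) := by
    rw [hdiff y hy, hact, abs_le]
    constructor <;> [skip; skip] <;> linarith
  refine (ENNReal.ofReal_le_ofReal habs).trans (le_of_eq ?_)
  rw [hgadd, show (a1 - b1) + (a2 - b2) = (a1 + a2) - (b1 + b2) by ring,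
    ← ENNReal.toReal_add hy1 hy2, ← ENNReal.toReal_add hb1' hb2',
    ENNReal.ofReal_sub _ ENNReal.toReal_nonneg,
    ENNReal.ofReal_toReal (ENNReal.add_ne_top.2 ⟨hy1, hy2⟩),
    ENNReal.ofReal_toReal (ENNReal.add_ne_top.2 ⟨hb1', hb2'⟩)]

/-- Let `u : E → ℝ` be measurable with `P_t|u| < ∞` pointwise, `u₁, u₂`
supermedian, `A = {u₁ + u₂ < ∞}`, and `u = u₁ - u₂` on `A`. Then
`V(u) = sup_τ V_τ(u) ≤ u₁ + u₂` on `A`. -/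
theorem statement2 {E : Type*} [MeasurableSpace E] (S : SubMarkovSemigroup E)
    (u : E → ℝ) (hu : Measurable u) (hint : ∀ (t : ℝ≥0) (x : E), Integrable u (S.P t x))
    (u₁ u₂ : E → ℝ≥0∞) (h₁ : S.IsSupermedian u₁) (h₂ : S.IsSupermedian u₂)
    (hdiff : ∀ x : E, u₁ x + u₂ x < ∞ → u x = (u₁ x).toReal - (u₂ x).toReal) :
    ∀ x : E, u₁ x + u₂ x < ∞ →
      (⨆ τ : FinPartition, ENNReal.ofReal (S.V u τ x)) ≤ u₁ x + u₂ x := by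
  intro x hx
  set g : E → ℝ≥0∞ := fun z => u₁ z + u₂ z with hgdef
  have hgm : Measurable g := h₁.1.add h₂.1
  have hfin : ∀ t : ℝ≥0, IsFiniteKernel (S.P t) := fun t =>
    ⟨⟨1, ENNReal.one_lt_top, fun z => S.subMarkov t z⟩⟩
  set Lg : ℝ≥0 → E → ℝ≥0∞ := fun t z => ∫⁻ w, g w ∂(S.P t z) with hLgdef
  have hLm : ∀ t, Measurable (Lg t) := fun t => by
    haveI := hfin t
    exact Measurable.lintegral_kernel_prod_right' (κ := S.P t) (hgm.comp measurable_snd)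
  have hLle : ∀ t z, Lg t z ≤ g z := fun t z => by
    have h : Lg t z = ∫⁻ w, u₁ w ∂(S.P t z) + ∫⁻ w, u₂ w ∂(S.P t z) :=
      lintegral_add_left h₁.1 _
    rw [h]
    exact add_le_add (h₁.2 t z) (h₂.2 t z)
  have hsemi : ∀ (t s : ℝ≥0) (z : E), Lg (t + s) z = ∫⁻ w, Lg s w ∂(S.P t z) :=
    fun t s z => S.map_add t s g hgm z
  have hanti : ∀ {t t' : ℝ≥0}, t ≤ t' → ∀ z, Lg t' z ≤ Lg t z := by
    intro t t' h z
    rw [show t' = t + (t' - t) from (add_tsub_cancel_of_le h).symm, hsemi]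
    exact lintegral_mono fun w => hLle _ w
  refine iSup_le fun τ => ?_
  set n := τ.n with hn
  set a : ℕ → ℝ≥0∞ := fun i => Lg (τ.t ⟨min i n, Nat.lt_succ_of_le (min_le_right _ _)⟩) x
    with hadef
  have hamono : ∀ i, a (i + 1) ≤ a i := fun i => by
    refine hanti (τ.mono ?_) x
    exact Fin.mk_le_mk.2 (min_le_min (Nat.le_succ i) le_rfl)
  -- per-term bounds
  have hterm : ∀ i : Fin τ.n,
      ENNReal.ofReal (S.act (τ.t i.castSucc)
        (fun y => |u y - S.act (τ.t i.succ - τ.t i.castSucc) u y|) x)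
        ≤ a i.val - a (i.val + 1) := by
    intro i
    have hai : a i.val = Lg (τ.t i.castSucc) x := by
      simp only [hadef]
      congr 1
      exact congrArg τ.t (Fin.ext (Nat.min_eq_left i.isLt.le))
    have hai' : a (i.val + 1) = Lg (τ.t i.succ) x := by
      simp only [hadef]
      congr 1
      exact congrArg τ.t (Fin.ext (Nat.min_eq_left i.isLt))
    set t := τ.t i.castSucc with ht
    set s := τ.t i.succ - τ.t i.castSucc with hs
    have hts : t + s = τ.t i.succ := add_tsub_cancel_of_le (τ.mono (Fin.castSucc_le_succ i))
    rw [hai, hai', ← hts]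
    by_cases hI : Integrable (fun y => |u y - S.act s u y|) (S.P t x)
    · rw [SubMarkovSemigroup.act,
        ofReal_integral_eq_lintegral_ofReal hI (ae_of_all _ fun y => abs_nonneg _)]
      have hgae : ∀ᵐ y ∂(S.P t x), g y < ∞ :=
        ae_lt_top hgm ((hLle t x).trans_lt hx).ne
      calc ∫⁻ y, ENNReal.ofReal |u y - S.act s u y| ∂(S.P t x)
          ≤ ∫⁻ y, (g y - Lg s y) ∂(S.P t x) := by
            refine lintegral_mono_ae (hgae.mono fun y hy => ?_)
            exact aux_key S u u₁ u₂ h₁ h₂ hdiff s y hy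
        _ = Lg t x - Lg (t + s) x := by
            rw [lintegral_sub (hLm s)
              (by rw [← hsemi]; exact ((hLle (t + s) x).trans_lt hx).ne)
              (ae_of_all _ fun y => hLle s y), ← hsemi]
    · rw [SubMarkovSemigroup.act, integral_undef hI]
      simp
  -- final term bound
  have hfinal : ENNReal.ofReal (S.act (τ.t (Fin.last τ.n)) (fun y => |u y|) x) ≤ a n := by
    have han : a n = Lg (τ.t (Fin.last n)) x := by
      simp only [hadef]
      congr 1
      exact congrArg τ.t (Fin.ext (Nat.min_self n))
    rw [han, SubMarkovSemigroup.act,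
      ofReal_integral_eq_lintegral_ofReal (hint _ x).abs (ae_of_all _ fun y => abs_nonneg _)]
    have hgae : ∀ᵐ y ∂(S.P (τ.t (Fin.last n)) x), g y < ∞ :=
      ae_lt_top hgm ((hLle _ x).trans_lt hx).ne
    refine lintegral_mono_ae (hgae.mono fun y hy => ?_)
    have hy1 : u₁ y ≠ ∞ := ((le_add_right le_rfl).trans_lt hy).ne
    have hy2 : u₂ y ≠ ∞ := ((le_add_left le_rfl).trans_lt hy).ne
    have habs : |u y| ≤ (u₁ y).toReal + (u₂ y).toReal := by
      rw [hdiff y hy]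
      exact (abs_sub _ _).trans (by rw [abs_of_nonneg ENNReal.toReal_nonneg,
        abs_of_nonneg ENNReal.toReal_nonneg])
    refine (ENNReal.ofReal_le_ofReal habs).trans (le_of_eq ?_)
    rw [ENNReal.ofReal_add ENNReal.toReal_nonneg ENNReal.toReal_nonneg,
      ENNReal.ofReal_toReal hy1, ENNReal.ofReal_toReal hy2]
  -- assemble
  have ha0 : a 0 = g x := by
    have h0 : τ.t ⟨min 0 n, Nat.lt_succ_of_le (min_le_right _ _)⟩ = 0 := by
      rw [show (⟨min 0 n, Nat.lt_succ_of_le (min_le_right _ _)⟩ : Fin (n + 1)) = 0 from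
        Fin.ext (Nat.zero_min n)]
      exact τ.first
    simp only [hadef, h0]
    exact S.map_zero g hgm x
  calc ENNReal.ofReal (S.V u τ x)
      ≤ (∑ i : Fin τ.n, ENNReal.ofReal (S.act (τ.t i.castSucc)
          (fun y => |u y - S.act (τ.t i.succ - τ.t i.castSucc) u y|) x))
        + ENNReal.ofReal (S.act (τ.t (Fin.last τ.n)) (fun y => |u y|) x) := by
        rw [SubMarkovSemigroup.V]
        exact (ENNReal.ofReal_add_le).trans (add_le_add_left (aux_ofReal_sum_le _ _) _)
    _ ≤ (∑ i : Fin τ.n, (a i.val - a (i.val + 1))) + a n :=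
        add_le_add (Finset.sum_le_sum fun i _ => hterm i) hfinal
    _ = (∑ i ∈ Finset.range n, (a i - a (i + 1))) + a n := by
        rw [Fin.sum_univ_eq_sum_range (fun k => a k - a (k + 1)) n]
    _ ≤ a 0 := aux_telescope a hamono n
    _ = u₁ x + u₂ x := ha0
end

section
/- Let u : E → ℝ be measurable with P_t|u| < ∞ pointwise for all t ≥ 0. If σ and τ are finite partitions of ℝ₊ (both containing 0) with σ ⊆ τ, then u₁^σ ≤ u₁^τ and u₂^σ ≤ u₂^τ pointwise; in particular V_σ(u) ≤ V_τ(u) pointwise. -/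
open MeasureTheory ProbabilityTheory ENNReal Filter
open scoped NNReal

/-- `u₁^τ = Σ_{i=1}^n P_{t_{i-1}} (u - P_{t_i - t_{i-1}} u)⁺ + P_{t_n} u⁺`. -/
noncomputable def SubMarkovSemigroup.uPos {E : Type*} [MeasurableSpace E]
    (S : SubMarkovSemigroup E) (u : E → ℝ) (τ : FinPartition) (x : E) : ℝ :=
  (∑ i : Fin τ.n, S.act (τ.t i.castSucc)
      (fun y => max (u y - S.act (τ.t i.succ - τ.t i.castSucc) u y) 0) x)
  + S.act (τ.t (Fin.last τ.n)) (fun y => max (u y) 0) x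

/-- `u₂^τ = Σ_{i=1}^n P_{t_{i-1}} (u - P_{t_i - t_{i-1}} u)⁻ + P_{t_n} u⁻`. -/
noncomputable def SubMarkovSemigroup.uNeg {E : Type*} [MeasurableSpace E]
    (S : SubMarkovSemigroup E) (u : E → ℝ) (τ : FinPartition) (x : E) : ℝ :=
  (∑ i : Fin τ.n, S.act (τ.t i.castSucc)
      (fun y => max (-(u y - S.act (τ.t i.succ - τ.t i.castSucc) u y)) 0) x)
  + S.act (τ.t (Fin.last τ.n)) (fun y => max (-u y) 0) x

/-!
Write `u₁` of the partition `p ≤ q ≤ …` recursively as `(u - P_{q-p} u)⁺ + P_{q-p}(u₁ of q ≤ …)`.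
Refining then reduces to inserting one point `r` with `p ≤ r ≤ q`, which cannot decrease `u₁`:
by the semigroup property `u - P_{q-p} u = (u - P_{r-p} u) + P_{r-p}(u - P_{q-r} u)`, and `(·)⁺`
is subadditive with `(P_t f)⁺ ≤ P_t f⁺`. The same two facts applied to `u = (u - P_d u) + P_d u`
handle a point added after the last one. Finally `u₂` is `u₁` of `-u`, and `V = u₁ + u₂`.
-/

namespace FinPartition

def points (π : FinPartition) : List ℝ≥0 :=
  List.ofFn fun i : Fin π.n => π.t i.succ

theorem pairwise_zero_cons_points (π : FinPartition) : (0 :: π.points).Pairwise (· ≤ ·) := by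
  have h : 0 :: π.points = List.ofFn π.t := by rw [List.ofFn_succ, π.first]; rfl
  rw [h, List.pairwise_ofFn]
  exact fun _ _ hij => π.mono hij.le

theorem mem_points_of_range_subset {σ τ : FinPartition} (hsub : Set.range σ.t ⊆ Set.range τ.t)
    {a : ℝ≥0} (ha : a ∈ σ.points) (ha₀ : 0 < a) : a ∈ τ.points := by
  obtain ⟨i, rfl⟩ := List.mem_ofFn.1 ha
  obtain ⟨j, hj⟩ := hsub ⟨i.succ, rfl⟩
  rcases Fin.eq_zero_or_eq_succ j with rfl | ⟨k, rfl⟩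
  · exact absurd (hj.symm.trans τ.first) ha₀.ne'
  · exact List.mem_ofFn.2 ⟨k, hj⟩

end FinPartition

namespace SubMarkovSemigroup

variable {E : Type*} [MeasurableSpace E]

def IsIntegrable (S : SubMarkovSemigroup E) (f : E → ℝ) : Prop :=
  Measurable f ∧ ∀ (t : ℝ≥0) (x : E), Integrable f (S.P t x)

variable {S : SubMarkovSemigroup E} {f g u : E → ℝ}

theorem P_zero_apply (x : E) : S.P 0 x = Measure.dirac x := by
  ext s hs
  have h := S.map_zero (s.indicator 1) (measurable_one.indicator hs) x
  rwa [lintegral_indicator_one hs, ← Measure.dirac_apply' x hs] at h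

theorem P_comp_P (a b : ℝ≥0) : S.P b ∘ₖ S.P a = S.P (a + b) := by
  ext x s hs
  have h := S.map_add a b (s.indicator 1) (measurable_one.indicator hs) x
  simp only [lintegral_indicator_one hs] at h
  rw [Kernel.comp_apply' _ _ _ hs, h]

namespace IsIntegrable

theorem sub (hf : S.IsIntegrable f) (hg : S.IsIntegrable g) : S.IsIntegrable (f - g) :=
  ⟨hf.1.sub hg.1, fun t x => (hf.2 t x).sub (hg.2 t x)⟩

theorem add (hf : S.IsIntegrable f) (hg : S.IsIntegrable g) : S.IsIntegrable (f + g) :=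
  ⟨hf.1.add hg.1, fun t x => (hf.2 t x).add (hg.2 t x)⟩

theorem neg (hf : S.IsIntegrable f) : S.IsIntegrable (-f) :=
  ⟨hf.1.neg, fun t x => (hf.2 t x).neg⟩

theorem posPart (hf : S.IsIntegrable f) : S.IsIntegrable fun y => max (f y) 0 :=
  ⟨hf.1.max measurable_const, fun t x => (hf.2 t x).pos_part⟩

theorem act (hf : S.IsIntegrable f) (t : ℝ≥0) : S.IsIntegrable (S.act t f) := by
  refine ⟨(hf.1.stronglyMeasurable.integral_kernel (κ := S.P t)).measurable, fun s x => ?_⟩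
  have hint : Integrable f ((S.P t ∘ₖ S.P s) x) := by rw [P_comp_P]; exact hf.2 _ _
  exact hint.integral_comp

end IsIntegrable

theorem act_zero (hf : Measurable f) (x : E) : S.act 0 f x = f x := by
  rw [act, P_zero_apply, integral_dirac' _ _ hf.stronglyMeasurable]

theorem act_add_eq_act_act (hf : S.IsIntegrable f) (a b : ℝ≥0) (x : E) :
    S.act (a + b) f x = S.act a (S.act b f) x := by
  have hint : Integrable f ((S.P b ∘ₖ S.P a) x) := by rw [P_comp_P]; exact hf.2 _ _
  rw [act, act, ← P_comp_P]
  exact Kernel.integral_comp hint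

theorem act_mono (hf : S.IsIntegrable f) (hg : S.IsIntegrable g) (h : f ≤ g) (t : ℝ≥0)
    (x : E) : S.act t f x ≤ S.act t g x :=
  integral_mono (hf.2 t x) (hg.2 t x) h

theorem act_add (hf : S.IsIntegrable f) (hg : S.IsIntegrable g) (t : ℝ≥0) (x : E) :
    S.act t (f + g) x = S.act t f x + S.act t g x :=
  integral_add (hf.2 t x) (hg.2 t x)

theorem act_sub (hf : S.IsIntegrable f) (hg : S.IsIntegrable g) (t : ℝ≥0) (x : E) :
    S.act t (f - g) x = S.act t f x - S.act t g x :=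
  integral_sub (hf.2 t x) (hg.2 t x)

theorem act_neg (t : ℝ≥0) (f : E → ℝ) (x : E) : S.act t (-f) x = -S.act t f x :=
  integral_neg f

theorem posPart_act_le (hf : S.IsIntegrable f) (t : ℝ≥0) (x : E) :
    max (S.act t f x) 0 ≤ S.act t (fun y => max (f y) 0) x :=
  max_le (act_mono hf hf.posPart (fun _ => le_max_left _ _) t x)
    (integral_nonneg fun _ => le_max_right _ _)

theorem posPart_add_act_le (hg : S.IsIntegrable g) (t : ℝ≥0) (c : ℝ) (x : E) :
    max (c + S.act t g x) 0 ≤ max c 0 + S.act t (fun y => max (g y) 0) x :=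
  (max_le (add_le_add (le_max_left _ _) (le_max_left _ _))
    (add_nonneg (le_max_right _ _) (le_max_right _ _))).trans
    (add_le_add_right (posPart_act_le hg t x) _)

variable (S) in
/-- `u₁` of the partition `0 ≤ q₁ - p ≤ q₂ - p ≤ …` for `l = [q₁, q₂, …]`. -/
noncomputable def uPosFrom (u : E → ℝ) : ℝ≥0 → List ℝ≥0 → E → ℝ
  | _, [] => fun y => max (u y) 0
  | p, q :: l => fun y => max (u y - S.act (q - p) u y) 0 + S.act (q - p) (uPosFrom u q l) y

theorem IsIntegrable.uPosFrom (hu : S.IsIntegrable u) :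
    ∀ (p : ℝ≥0) (l : List ℝ≥0), S.IsIntegrable (S.uPosFrom u p l)
  | _, [] => hu.posPart
  | _, q :: l => (hu.sub (hu.act _)).posPart.add ((hu.uPosFrom q l).act _)

theorem uPosFrom_cons_self (hu : S.IsIntegrable u) (p : ℝ≥0) (l : List ℝ≥0) :
    S.uPosFrom u p (p :: l) = S.uPosFrom u p l := by
  funext y
  simp only [uPosFrom, tsub_self, act_zero hu.1, act_zero (hu.uPosFrom p l).1, sub_self,
    max_self, zero_add]

theorem uPosFrom_cons_mono (hu : S.IsIntegrable u) {p q : ℝ≥0} {l₁ l₂ : List ℝ≥0}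
    (h : S.uPosFrom u q l₁ ≤ S.uPosFrom u q l₂) :
    S.uPosFrom u p (q :: l₁) ≤ S.uPosFrom u p (q :: l₂) := fun y =>
  add_le_add_right (act_mono (hu.uPosFrom q l₁) (hu.uPosFrom q l₂) h _ y) _

theorem posPart_le_uPosFrom (hu : S.IsIntegrable u) :
    ∀ (p : ℝ≥0) (l : List ℝ≥0) (y : E), max (u y) 0 ≤ S.uPosFrom u p l y
  | _, [], _ => le_rfl
  | p, q :: l, y =>
    calc max (u y) 0 = max ((u y - S.act (q - p) u y) + S.act (q - p) u y) 0 := by ring_nf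
      _ ≤ max (u y - S.act (q - p) u y) 0 + S.act (q - p) (fun z => max (u z) 0) y :=
        posPart_add_act_le hu _ _ y
      _ ≤ S.uPosFrom u p (q :: l) y :=
        uPosFrom_cons_mono hu (l₁ := []) (fun z => posPart_le_uPosFrom hu q l z) y

theorem uPosFrom_le_uPosFrom_cons (hu : S.IsIntegrable u) {p r q : ℝ≥0} (hpr : p ≤ r)
    (hrq : r ≤ q) (l : List ℝ≥0) : S.uPosFrom u p (q :: l) ≤ S.uPosFrom u p (r :: q :: l) := by
  intro y
  have hsplit : q - p = (r - p) + (q - r) := by rw [add_comm, tsub_add_tsub_cancel hrq hpr]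
  have hdiff : u y - S.act (q - p) u y
      = (u y - S.act (r - p) u y) + S.act (r - p) (u - S.act (q - r) u) y := by
    rw [act_sub hu (hu.act _), hsplit, act_add_eq_act_act hu]; ring
  have htail : S.act (q - p) (S.uPosFrom u q l) y
      = S.act (r - p) (S.act (q - r) (S.uPosFrom u q l)) y := by
    rw [hsplit, act_add_eq_act_act (hu.uPosFrom q l)]
  calc S.uPosFrom u p (q :: l) y
      = max (u y - S.act (q - p) u y) 0 + S.act (q - p) (S.uPosFrom u q l) y := rfl
    _ ≤ max (u y - S.act (r - p) u y) 0
          + S.act (r - p) (fun z => max (u z - S.act (q - r) u z) 0) y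
          + S.act (r - p) (S.act (q - r) (S.uPosFrom u q l)) y := by
      rw [hdiff, htail]
      exact add_le_add_left (posPart_add_act_le (hu.sub (hu.act _)) _ _ y) _
    _ = S.uPosFrom u p (r :: q :: l) y := by
      rw [add_assoc]
      exact congrArg _ (act_add (hu.sub (hu.act _)).posPart ((hu.uPosFrom q l).act _) _ y).symm

theorem uPosFrom_mono (hu : S.IsIntegrable u) {p : ℝ≥0} :
    ∀ {l₁ l₂ : List ℝ≥0}, (p :: l₁).Pairwise (· ≤ ·) → (p :: l₂).Pairwise (· ≤ ·) →
      (∀ a ∈ l₁, p < a → a ∈ l₂) → S.uPosFrom u p l₁ ≤ S.uPosFrom u p l₂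
  | [], l₂, _, _, _ => posPart_le_uPosFrom hu p l₂
  | q :: l₁, l₂, h₁, h₂, hsub => by
    obtain ⟨hp₁, hq₁⟩ := List.pairwise_cons.1 h₁
    obtain rfl | hpq := (hp₁ q List.mem_cons_self).eq_or_lt
    · rw [uPosFrom_cons_self hu]
      exact uPosFrom_mono hu hq₁ h₂ fun a ha => hsub a (List.mem_cons_of_mem _ ha)
    obtain ⟨hp₂, hr₂⟩ := List.pairwise_cons.1 h₂
    match l₂, hsub q List.mem_cons_self hpq with
    | r :: l₂, hq₂ =>
      obtain rfl | hpr := (hp₂ r List.mem_cons_self).eq_or_lt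
      · rw [uPosFrom_cons_self hu]
        exact uPosFrom_mono hu h₁ hr₂ fun a ha hpa =>
          (List.mem_cons.1 (hsub a ha hpa)).resolve_left hpa.ne'
      have hrq : r ≤ q := (List.mem_cons.1 hq₂).elim ge_of_eq (List.rel_of_pairwise_cons hr₂)
      have hr₁ : (r :: q :: l₁).Pairwise (· ≤ ·) := List.pairwise_cons.2
        ⟨List.forall_mem_cons.2 ⟨hrq, fun a ha => hrq.trans (List.rel_of_pairwise_cons hq₁ ha)⟩,
          hq₁⟩
      calc S.uPosFrom u p (q :: l₁) ≤ S.uPosFrom u p (r :: q :: l₁) :=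
            uPosFrom_le_uPosFrom_cons hu hpr.le hrq l₁
        _ ≤ S.uPosFrom u p (r :: l₂) := uPosFrom_cons_mono hu <| uPosFrom_mono hu hr₁ hr₂
            fun a ha hra => (List.mem_cons.1 (hsub a ha (hpr.trans hra))).resolve_left hra.ne'
  termination_by l₁ l₂ => l₁.length + l₂.length

theorem sum_add_act_posPart_eq_act_uPosFrom (hu : S.IsIntegrable u) :
    ∀ (n : ℕ) (t : Fin (n + 1) → ℝ≥0), Monotone t → ∀ x : E,
      (∑ i : Fin n, S.act (t i.castSucc)
          (fun y => max (u y - S.act (t i.succ - t i.castSucc) u y) 0) x)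
        + S.act (t (Fin.last n)) (fun y => max (u y) 0) x
      = S.act (t 0) (S.uPosFrom u (t 0) (List.ofFn fun i : Fin n => t i.succ)) x
  | 0, t, _, x => by simp [uPosFrom]
  | n + 1, t, ht, x => by
    have ih := sum_add_act_posPart_eq_act_uPosFrom hu n (fun i => t i.succ)
      (ht.comp (Fin.strictMono_succ.monotone)) x
    simp only [Fin.succ_castSucc, Fin.succ_last] at ih
    have h01 : t 0 + (t (Fin.succ 0) - t 0) = t (Fin.succ 0) :=
      add_tsub_cancel_of_le (ht (Fin.zero_le _))
    rw [Fin.sum_univ_succ, add_assoc, ih, List.ofFn_succ, Fin.castSucc_zero, ← h01,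
      act_add_eq_act_act (hu.uPosFrom _ _), h01]
    exact (act_add (hu.sub (hu.act _)).posPart ((hu.uPosFrom _ _).act _) _ x).symm

theorem uPos_eq_uPosFrom (hu : S.IsIntegrable u) (π : FinPartition) (x : E) :
    S.uPos u π x = S.uPosFrom u 0 π.points x := by
  rw [uPos, sum_add_act_posPart_eq_act_uPosFrom hu π.n π.t π.mono, π.first,
    act_zero (hu.uPosFrom _ _).1]
  rfl

theorem uPos_mono (hu : S.IsIntegrable u) {σ τ : FinPartition}
    (hsub : Set.range σ.t ⊆ Set.range τ.t) (x : E) : S.uPos u σ x ≤ S.uPos u τ x := by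
  rw [uPos_eq_uPosFrom hu, uPos_eq_uPosFrom hu]
  exact uPosFrom_mono hu σ.pairwise_zero_cons_points τ.pairwise_zero_cons_points
    (fun _ ha ha₀ => FinPartition.mem_points_of_range_subset hsub ha ha₀) x

theorem uNeg_eq_uPos_neg (u : E → ℝ) (π : FinPartition) : S.uNeg u π = S.uPos (-u) π := by
  funext x
  simp only [uNeg, uPos, act_neg, Pi.neg_apply, neg_sub, sub_neg_eq_add, neg_add_eq_sub]

theorem V_eq_uPos_add_uNeg (hu : S.IsIntegrable u) (π : FinPartition) (x : E) :
    S.V u π x = S.uPos u π x + S.uNeg u π x := by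
  have hsplit : ∀ (f : E → ℝ), S.IsIntegrable f → ∀ t, S.act t (fun y => |f y|) x
      = S.act t (fun y => max (f y) 0) x + S.act t (fun y => max (-f y) 0) x := fun f hf t => by
    simp only [← max_zero_add_max_neg_zero_eq_abs_self]
    exact act_add hf.posPart hf.neg.posPart t x
  rw [V, uPos, uNeg, hsplit u hu, ← add_add_add_comm, ← Finset.sum_add_distrib]
  congr 1
  exact Finset.sum_congr rfl fun i _ =>
    hsplit (fun y => u y - S.act (π.t i.succ - π.t i.castSucc) u y) (hu.sub (hu.act _)) _

end SubMarkovSemigroup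

open SubMarkovSemigroup in
/-- If `σ ⊆ τ` (as sets of partition points) then `u₁^σ ≤ u₁^τ`,
`u₂^σ ≤ u₂^τ` and `V_σ(u) ≤ V_τ(u)` pointwise. -/
theorem statement3 {E : Type*} [MeasurableSpace E] (S : SubMarkovSemigroup E)
    (u : E → ℝ) (hu : Measurable u) (hint : ∀ (t : ℝ≥0) (x : E), Integrable u (S.P t x))
    (σ τ : FinPartition) (hsub : Set.range σ.t ⊆ Set.range τ.t) :
    (∀ x : E, S.uPos u σ x ≤ S.uPos u τ x) ∧
    (∀ x : E, S.uNeg u σ x ≤ S.uNeg u τ x) ∧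
    (∀ x : E, S.V u σ x ≤ S.V u τ x) := by
  have hu' : S.IsIntegrable u := ⟨hu, hint⟩
  have hPos := uPos_mono hu' hsub
  have hNeg : ∀ x, S.uNeg u σ x ≤ S.uNeg u τ x := by
    simpa only [uNeg_eq_uPos_neg] using uPos_mono hu'.neg hsub
  refine ⟨hPos, hNeg, fun x => ?_⟩
  rw [V_eq_uPos_add_uNeg hu', V_eq_uPos_add_uNeg hu']
  exact add_le_add (hPos x) (hNeg x)
end

section
/- Let u₁, u₂ : E → [0,∞) be real-valued supermedian functions for (P_t) (in particular, real-valued excessive functions) and u := u₁ − u₂. Then for every x ∈ E, Var^{ℙ^x}((u(X_t))_{t≥0}) ≤ u₁(x) + u₂(x) < ∞; hence (u(X_t))_{t≥0} is a ℙ^x-quasimartingale for every x ∈ E. -/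
open MeasureTheory ProbabilityTheory ENNReal Filter
open scoped NNReal

/-!
Under `ℙ^x` the Markov property identifies `𝔼[u(X_b) - u(X_a) | 𝒢_a]` with `(P_{b-a}u - u)(X_a)`
and the law of `X_t` with `P_t(x, ·)`, so the variation sum of a partition `τ` is exactly
`V_τ(u)(x)`. Since `u₁ - P_s u₁` and `u₂ - P_s u₂` are nonnegative,
`|u - P_s u| ≤ (u₁ - P_s u₁) + (u₂ - P_s u₂)`; applying `P_{t_{i-1}}` and the semigroup law, the
sum telescopes to `u₁(x) + u₂(x) - P_{t_n}(u₁ + u₂)(x)`, which the last term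
`P_{t_n}|u| ≤ P_{t_n}(u₁ + u₂)` compensates.
-/

lemma Fin.sum_castSucc_sub_succ {M : Type*} [AddCommGroup M] {n : ℕ} (A : Fin (n + 1) → M) :
    ∑ i : Fin n, (A i.castSucc - A i.succ) = A 0 - A (Fin.last n) := by
  induction n with
  | zero => simp
  | succ n ih =>
    rw [Fin.sum_univ_castSucc]
    simp only [Fin.succ_castSucc, ih fun i => A i.castSucc]
    simp

namespace SubMarkovSemigroup

variable {E : Type*} [MeasurableSpace E] (S : SubMarkovSemigroup E)

instance isFiniteKernel (t : ℝ≥0) : IsFiniteKernel (S.P t) :=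
  ⟨⟨1, one_lt_top, S.subMarkov t⟩⟩

structure IsSupermedian_s5 (v : E → ℝ) : Prop where
  measurable : Measurable v
  nonneg : ∀ x, 0 ≤ v x
  lintegral_le : ∀ t x, ∫⁻ y, ENNReal.ofReal (v y) ∂(S.P t x) ≤ ENNReal.ofReal (v x)

variable {S} {u₁ u₂ v : E → ℝ}

lemma measurable_act_s5 (t : ℝ≥0) (hv : Measurable v) : Measurable (S.act t v) :=
  (hv.stronglyMeasurable.integral_kernel (κ := S.P t)).measurable

lemma act_nonneg (t : ℝ≥0) (hv0 : ∀ y, 0 ≤ v y) (x : E) : 0 ≤ S.act t v x :=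
  integral_nonneg hv0

lemma act_eq_toReal_lintegral (t : ℝ≥0) (hv : Measurable v) (hv0 : ∀ y, 0 ≤ v y) (x : E) :
    S.act t v x = (∫⁻ y, ENNReal.ofReal (v y) ∂(S.P t x)).toReal :=
  integral_eq_lintegral_of_nonneg_ae (ae_of_all _ hv0) hv.aestronglyMeasurable

lemma act_zero_s5 (hv : Measurable v) (hv0 : ∀ y, 0 ≤ v y) (x : E) : S.act 0 v x = v x := by
  rw [act_eq_toReal_lintegral 0 hv hv0, S.map_zero (fun y => ENNReal.ofReal (v y)) (ENNReal.measurable_ofReal.comp hv),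
    toReal_ofReal (hv0 x)]

lemma act_act (t s : ℝ≥0) (hv : Measurable v) (hv0 : ∀ y, 0 ≤ v y)
    (hint : ∀ y, Integrable v (S.P s y)) (x : E) :
    S.act t (S.act s v) x = S.act (t + s) v x := by
  rw [act_eq_toReal_lintegral t (measurable_act_s5 s hv) (act_nonneg s hv0),
    act_eq_toReal_lintegral (t + s) hv hv0, 
    S.map_add t s (fun y => ENNReal.ofReal (v y)) (ENNReal.measurable_ofReal.comp hv)]
  congr 1
  exact lintegral_congr fun y => ofReal_integral_eq_lintegral_ofReal (hint y) (ae_of_all _ hv0)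

namespace IsSupermedian_s5

lemma integrable (hv : S.IsSupermedian_s5 v) (t : ℝ≥0) (x : E) : Integrable v (S.P t x) :=
  ⟨hv.measurable.aestronglyMeasurable, (hasFiniteIntegral_iff_ofReal (ae_of_all _ hv.nonneg)).2
    ((hv.lintegral_le t x).trans_lt ofReal_lt_top)⟩

lemma act_le (hv : S.IsSupermedian_s5 v) (t : ℝ≥0) (x : E) : S.act t v x ≤ v x := by
  rw [act_eq_toReal_lintegral t hv.measurable hv.nonneg]
  exact toReal_le_of_le_ofReal (hv.nonneg x) (hv.lintegral_le t x)

lemma integrable_act (hv : S.IsSupermedian_s5 v) (s t : ℝ≥0) (x : E) :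
    Integrable (S.act s v) (S.P t x) :=
  (hv.integrable t x).mono' (measurable_act_s5 s hv.measurable).aestronglyMeasurable <|
    ae_of_all _ fun y => by
      rw [Real.norm_of_nonneg (act_nonneg s hv.nonneg y)]
      exact hv.act_le s y

lemma integrable_sub_act (hv : S.IsSupermedian_s5 v) (s t : ℝ≥0) (x : E) :
    Integrable (fun y => v y - S.act s v y) (S.P t x) :=
  (hv.integrable t x).sub (hv.integrable_act s t x)

lemma act_sub_act (hv : S.IsSupermedian_s5 v) (a s : ℝ≥0) (x : E) :
    S.act a (fun y => v y - S.act s v y) x = S.act a v x - S.act (a + s) v x := by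
  rw [← act_act a s hv.measurable hv.nonneg (hv.integrable s)]
  exact integral_sub (hv.integrable a x) (hv.integrable_act s a x)

end IsSupermedian_s5

lemma act_sub_s5 (h₁ : S.IsSupermedian_s5 u₁) (h₂ : S.IsSupermedian_s5 u₂) (t : ℝ≥0) (x : E) :
    S.act t (u₁ - u₂) x = S.act t u₁ x - S.act t u₂ x :=
  integral_sub (h₁.integrable t x) (h₂.integrable t x)

lemma abs_sub_act_sub_le (h₁ : S.IsSupermedian_s5 u₁) (h₂ : S.IsSupermedian_s5 u₂) (s : ℝ≥0) (y : E) :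
    |(u₁ - u₂) y - S.act s (u₁ - u₂) y| ≤ (u₁ y - S.act s u₁ y) + (u₂ y - S.act s u₂ y) := by
  rw [act_sub_s5 h₁ h₂, Pi.sub_apply, sub_sub_sub_comm]
  refine (abs_sub _ _).trans_eq ?_
  rw [abs_of_nonneg (sub_nonneg.2 (h₁.act_le s y)), abs_of_nonneg (sub_nonneg.2 (h₂.act_le s y))]

lemma act_abs_sub_act_sub_le (h₁ : S.IsSupermedian_s5 u₁) (h₂ : S.IsSupermedian_s5 u₂)
    (a s : ℝ≥0) (x : E) :
    S.act a (fun y => |(u₁ - u₂) y - S.act s (u₁ - u₂) y|) x ≤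
      (S.act a u₁ x - S.act (a + s) u₁ x) + (S.act a u₂ x - S.act (a + s) u₂ x) := by
  rw [← h₁.act_sub_act, ← h₂.act_sub_act, act, act, act,
    ← integral_add (h₁.integrable_sub_act s a x) (h₂.integrable_sub_act s a x)]
  exact integral_mono_of_nonneg (ae_of_all _ fun _ => abs_nonneg _)
    ((h₁.integrable_sub_act s a x).add (h₂.integrable_sub_act s a x))
    (ae_of_all _ (abs_sub_act_sub_le h₁ h₂ s))

lemma act_abs_sub_le (h₁ : S.IsSupermedian_s5 u₁) (h₂ : S.IsSupermedian_s5 u₂) (t : ℝ≥0) (x : E) :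
    S.act t (fun y => |(u₁ - u₂) y|) x ≤ S.act t u₁ x + S.act t u₂ x := by
  rw [act, act, act, ← integral_add (h₁.integrable t x) (h₂.integrable t x)]
  refine integral_mono_of_nonneg (ae_of_all _ fun _ => abs_nonneg _)
    ((h₁.integrable t x).add (h₂.integrable t x)) (ae_of_all _ fun y => ?_)
  have := h₁.nonneg y
  have := h₂.nonneg y
  exact abs_sub_le_iff.2 ⟨by linarith, by linarith⟩

lemma V_sub_le (h₁ : S.IsSupermedian_s5 u₁) (h₂ : S.IsSupermedian_s5 u₂) (τ : FinPartition) (x : E) :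
    S.V (u₁ - u₂) τ x ≤ u₁ x + u₂ x := by
  have hstep (i : Fin τ.n) : τ.t i.castSucc + (τ.t i.succ - τ.t i.castSucc) = τ.t i.succ :=
    add_tsub_cancel_of_le (τ.mono i.castSucc_le_succ)
  calc S.V (u₁ - u₂) τ x
      ≤ (∑ i : Fin τ.n, ((S.act (τ.t i.castSucc) u₁ x - S.act (τ.t i.succ) u₁ x)
          + (S.act (τ.t i.castSucc) u₂ x - S.act (τ.t i.succ) u₂ x)))
        + (S.act (τ.t (Fin.last τ.n)) u₁ x + S.act (τ.t (Fin.last τ.n)) u₂ x) := by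
        refine add_le_add (Finset.sum_le_sum fun i _ => ?_) (act_abs_sub_le h₁ h₂ _ x)
        simpa only [hstep] using act_abs_sub_act_sub_le h₁ h₂ (τ.t i.castSucc)
          (τ.t i.succ - τ.t i.castSucc) x
    _ = S.act (τ.t 0) u₁ x + S.act (τ.t 0) u₂ x := by
        rw [Finset.sum_add_distrib, Fin.sum_castSucc_sub_succ fun j => S.act (τ.t j) u₁ x,
          Fin.sum_castSucc_sub_succ fun j => S.act (τ.t j) u₂ x]
        ring
    _ = u₁ x + u₂ x := by
        rw [τ.first, act_zero_s5 h₁.measurable h₁.nonneg, act_zero_s5 h₂.measurable h₂.nonneg]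

end SubMarkovSemigroup

structure IsMarkovProcess {E : Type*} [MeasurableSpace E] (S : SubMarkovSemigroup E)
    {Ω : Type*} {mΩ : MeasurableSpace Ω} (𝒢 : Filtration ℝ≥0 mΩ) (X : ℝ≥0 → Ω → E)
    (Px : E → Measure Ω) : Prop where
  adapted : ∀ t : ℝ≥0, @Measurable Ω E (𝒢 t) _ (X t)
  isProbabilityMeasure : ∀ x, IsProbabilityMeasure (Px x)
  start : ∀ x, Px x {ω | X 0 ω = x} = 1
  markov : ∀ (s t : ℝ≥0) (f : E → ℝ), Measurable f →
    (∀ x : E, Integrable f (S.P t x)) → ∀ x : E,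
    (Px x)[(fun ω => f (X (s + t) ω)) | 𝒢 s] =ᵐ[Px x] fun ω => S.act t f (X s ω)

namespace IsMarkovProcess

variable {E : Type*} [MeasurableSpace E] {S : SubMarkovSemigroup E}
  {Ω : Type*} {mΩ : MeasurableSpace Ω} {𝒢 : Filtration ℝ≥0 mΩ} {X : ℝ≥0 → Ω → E}
  {Px : E → Measure Ω} {u : E → ℝ}

lemma measurable (hX : IsMarkovProcess S 𝒢 X Px) (t : ℝ≥0) : Measurable (X t) :=
  (hX.adapted t).mono (𝒢.le t) le_rfl

lemma comp_zero_ae_eq (hX : IsMarkovProcess S 𝒢 X Px) {g : E → ℝ} (hg : Measurable g) (x : E) :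
    (fun ω => g (X 0 ω)) =ᵐ[Px x] fun _ => g x := by
  have := hX.isProbabilityMeasure x
  refine (ae_iff_measure_eq
    (measurableSet_eq_fun (hg.comp (hX.measurable 0)) measurable_const).nullMeasurableSet).2 ?_
  refine le_antisymm (measure_mono (Set.subset_univ _)) ?_
  rw [measure_univ, ← hX.start x]
  exact measure_mono fun ω hω => congrArg g hω

lemma map_eq (hX : IsMarkovProcess S 𝒢 X Px) (t : ℝ≥0) (x : E) :
    (Px x).map (X t) = S.P t x := by
  have := hX.isProbabilityMeasure x
  ext A hA
  have hf : Measurable (A.indicator (1 : E → ℝ)) := measurable_one.indicator hA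
  have hexp : ∫ ω, A.indicator 1 (X t ω) ∂(Px x) = S.act t (A.indicator 1) x :=
    calc ∫ ω, A.indicator 1 (X t ω) ∂(Px x)
        = ∫ ω, ((Px x)[fun ω => A.indicator 1 (X (0 + t) ω) | 𝒢 0]) ω ∂(Px x) := by
          rw [zero_add, integral_condExp (𝒢.le 0)]
      _ = ∫ ω, S.act t (A.indicator 1) (X 0 ω) ∂(Px x) :=
          integral_congr_ae <| hX.markov 0 t _ hf (fun y => (integrable_const 1).indicator hA) x
      _ = S.act t (A.indicator 1) x := by
          rw [integral_congr_ae (hX.comp_zero_ae_eq (SubMarkovSemigroup.measurable_act_s5 t hf) x)]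
          simp
  rw [← integral_map (hX.measurable t).aemeasurable hf.aestronglyMeasurable,
    integral_indicator_one hA, SubMarkovSemigroup.act, integral_indicator_one hA] at hexp
  exact (ENNReal.toReal_eq_toReal_iff' (measure_ne_top _ _) (measure_ne_top _ _)).1 hexp

lemma integral_comp (hX : IsMarkovProcess S 𝒢 X Px) (t : ℝ≥0) {f : E → ℝ} (hf : Measurable f)
    (x : E) : ∫ ω, f (X t ω) ∂(Px x) = S.act t f x := by
  rw [← integral_map (hX.measurable t).aemeasurable hf.aestronglyMeasurable, hX.map_eq]
  rfl

lemma integrable_comp_iff (hX : IsMarkovProcess S 𝒢 X Px) (t : ℝ≥0) {f : E → ℝ}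
    (hf : Measurable f) (x : E) :
    Integrable (fun ω => f (X t ω)) (Px x) ↔ Integrable f (S.P t x) := by
  rw [← hX.map_eq t x, integrable_map_measure hf.aestronglyMeasurable (hX.measurable t).aemeasurable]
  rfl

lemma condExp_increment_ae_eq (hX : IsMarkovProcess S 𝒢 X Px) (hu : Measurable u)
    (hint : ∀ t y, Integrable u (S.P t y)) {a b : ℝ≥0} (hab : a ≤ b) (x : E) :
    (Px x)[fun ω => u (X b ω) - u (X a ω) | 𝒢 a]
      =ᵐ[Px x] fun ω => S.act (b - a) u (X a ω) - u (X a ω) := by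
  have := hX.isProbabilityMeasure x
  have hintX (t : ℝ≥0) : Integrable (fun ω => u (X t ω)) (Px x) :=
    (hX.integrable_comp_iff t hu x).2 (hint t x)
  have hmarkov := hX.markov a (b - a) u hu (hint _) x
  rw [add_tsub_cancel_of_le hab] at hmarkov
  refine (condExp_sub (hintX b) (hintX a) _).trans (hmarkov.sub ?_)
  exact EventuallyEq.of_eq
    (condExp_of_stronglyMeasurable (𝒢.le a) (hu.comp (hX.adapted a)).stronglyMeasurable (hintX a))

lemma integral_variation_eq_V (hX : IsMarkovProcess S 𝒢 X Px) (hu : Measurable u)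
    (hint : ∀ t y, Integrable u (S.P t y)) (τ : FinPartition) (x : E) :
    ∫ ω, ((∑ i : Fin τ.n,
        |((Px x)[(fun ω' => u (X (τ.t i.succ) ω') - u (X (τ.t i.castSucc) ω'))
          | 𝒢 (τ.t i.castSucc)]) ω|)
      + |u (X (τ.t (Fin.last τ.n)) ω)|) ∂(Px x) = S.V u τ x := by
  have hint_ce (i : Fin τ.n) : Integrable (fun ω =>
      |((Px x)[(fun ω' => u (X (τ.t i.succ) ω') - u (X (τ.t i.castSucc) ω'))
        | 𝒢 (τ.t i.castSucc)]) ω|) (Px x) := integrable_condExp.abs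
  rw [integral_add (integrable_finsetSum _ fun i _ => hint_ce i)
      ((hX.integrable_comp_iff _ hu x).2 (hint _ x)).abs,
    integral_finsetSum _ fun i _ => hint_ce i, hX.integral_comp _ hu.abs]
  refine congrArg (· + _) (Finset.sum_congr rfl fun i _ => ?_)
  have hce := hX.condExp_increment_ae_eq hu hint (τ.mono i.castSucc_le_succ) x
  refine (integral_congr_ae ?_).trans
    (hX.integral_comp (f := fun y => |u y - S.act _ u y|) _
      (hu.sub (SubMarkovSemigroup.measurable_act_s5 _ hu)).abs x)
  filter_upwards [hce] with ω hω
  rw [hω, abs_sub_comm]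

lemma quasiVar_eq_iSup_V (hX : IsMarkovProcess S 𝒢 X Px) (hu : Measurable u)
    (hint : ∀ t y, Integrable u (S.P t y)) (x : E) :
    quasiVar 𝒢 (Px x) (fun t ω => u (X t ω)) = ⨆ τ, ENNReal.ofReal (S.V u τ x) :=
  iSup_congr fun τ => by rw [hX.integral_variation_eq_V hu hint]

end IsMarkovProcess

/-- If `u₁, u₂ : E → [0,∞)` are real-valued supermedian functions and
`u := u₁ - u₂`, then for every `x`, `Var^{ℙ^x}((u(X_t))_t) ≤ u₁(x) + u₂(x) < ∞`; in
particular `(u(X_t))_t` is a `ℙ^x`-quasimartingale for every `x`. -/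
theorem statement5 {E : Type*} [MeasurableSpace E] (S : SubMarkovSemigroup E)
    {Ω : Type*} {mΩ : MeasurableSpace Ω} (𝒢 : Filtration ℝ≥0 mΩ)
    (X : ℝ≥0 → Ω → E) (Px : E → Measure Ω)
    (hAdapted : ∀ t : ℝ≥0, @Measurable Ω E (𝒢 t) _ (X t))
    (hProb : ∀ x, IsProbabilityMeasure (Px x))
    (hStart : ∀ x, Px x {ω | X 0 ω = x} = 1)
    (hMarkov : ∀ (s t : ℝ≥0) (f : E → ℝ), Measurable f →
      (∀ x : E, Integrable f (S.P t x)) → ∀ x : E,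
      (Px x)[(fun ω => f (X (s + t) ω)) | 𝒢 s] =ᵐ[Px x] fun ω => S.act t f (X s ω))
    (u₁ u₂ : E → ℝ) (hm₁ : Measurable u₁) (hm₂ : Measurable u₂)
    (hpos₁ : ∀ x, 0 ≤ u₁ x) (hpos₂ : ∀ x, 0 ≤ u₂ x)
    (hsm₁ : ∀ (t : ℝ≥0) (x : E),
      ∫⁻ y, ENNReal.ofReal (u₁ y) ∂(S.P t x) ≤ ENNReal.ofReal (u₁ x))
    (hsm₂ : ∀ (t : ℝ≥0) (x : E),
      ∫⁻ y, ENNReal.ofReal (u₂ y) ∂(S.P t x) ≤ ENNReal.ofReal (u₂ x))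
    (u : E → ℝ) (hu : u = fun x => u₁ x - u₂ x) :
    ∀ x : E,
      quasiVar 𝒢 (Px x) (fun t ω => u (X t ω)) ≤ ENNReal.ofReal (u₁ x + u₂ x) ∧
      quasiVar 𝒢 (Px x) (fun t ω => u (X t ω)) < ∞ := by
  intro x
  have hX : IsMarkovProcess S 𝒢 X Px := ⟨hAdapted, hProb, hStart, hMarkov⟩
  have h₁ : S.IsSupermedian_s5 u₁ := ⟨hm₁, hpos₁, hsm₁⟩
  have h₂ : S.IsSupermedian_s5 u₂ := ⟨hm₂, hpos₂, hsm₂⟩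
  have hbound : quasiVar 𝒢 (Px x) (fun t ω => u (X t ω)) ≤ ENNReal.ofReal (u₁ x + u₂ x) := by
    rw [hu, hX.quasiVar_eq_iSup_V (u := fun y => u₁ y - u₂ y) (hm₁.sub hm₂)
      fun t y => (h₁.integrable t y).sub (h₂.integrable t y)]
    exact iSup_le fun τ => ofReal_le_ofReal (SubMarkovSemigroup.V_sub_le h₁ h₂ τ x)
  exact ⟨hbound, hbound.trans_lt ofReal_lt_top⟩
end

section
/- Let E be a topological space equipped with its Borel σ-algebra and U a kernel on E with U 1_E ≤ 1 which is strong Feller (U f is continuous on E for every bounded measurable f : E → ℝ) and topologically irreducible (U 1_D(x) > 0 for every nonempty open set D ⊆ E and every x ∈ E). If B ⊆ E is a nonempty Borel set with U 1_{E∖B}(x) = 0 for every x ∈ B, then U 1_{E∖B}(x) = 0 for every x ∈ E. -/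
/-!
The zero set `Z = {x | U x Bᶜ = 0}` contains `B` and is closed, because strong Feller makes
`x ↦ U x Bᶜ` continuous. If `Zᶜ` were nonempty it would be a nonempty open set, so by
irreducibility it would be charged from a point of `B`; but `Zᶜ ⊆ Bᶜ` is not charged from `B`.
-/

open MeasureTheory ProbabilityTheory ENNReal

namespace ProbabilityTheory.Kernel

variable {E : Type*} [TopologicalSpace E] [MeasurableSpace E]

def IsStrongFeller (U : Kernel E E) : Prop :=
  ∀ f : E → ℝ, Measurable f → (∃ C : ℝ, ∀ x, |f x| ≤ C) → Continuous (fun x => ∫ y, f y ∂(U x))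

def IsTopologicallyIrreducible (U : Kernel E E) : Prop :=
  ∀ D : Set E, IsOpen D → D.Nonempty → ∀ x : E, 0 < U x D

theorem IsStrongFeller.continuous_measure_toReal {U : Kernel E E} (hU : U.IsStrongFeller)
    {s : Set E} (hs : MeasurableSet s) : Continuous fun x => (U x s).toReal := by
  have h := hU (s.indicator 1) (measurable_one.indicator hs)
    ⟨1, fun x => by by_cases hx : x ∈ s <;> simp [hx]⟩
  convert h using 2 with x
  exact (integral_indicator_one hs).symm

theorem isClosed_setOf_measure_eq_zero {U : Kernel E E} {s : Set E}
    (hfin : ∀ x, U x s ≠ ∞) (hcont : Continuous fun x => (U x s).toReal) :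
    IsClosed {x | U x s = 0} := by
  have hZ : {x | U x s = 0} = (fun x => (U x s).toReal) ⁻¹' {0} := by
    ext x
    simp [ENNReal.toReal_eq_zero_iff, hfin x]
  exact hZ ▸ isClosed_singleton.preimage hcont

theorem IsTopologicallyIrreducible.eq_univ_of_isClosed {U : Kernel E E}
    (hU : U.IsTopologicallyIrreducible) {Z : Set E} (hZ : IsClosed Z) {x : E}
    (hx : U x Zᶜ = 0) : Z = Set.univ := by
  by_contra hne
  exact (hU Zᶜ hZ.isOpen_compl (Set.nonempty_compl.mpr hne) x).ne' hx

end ProbabilityTheory.Kernel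

open ProbabilityTheory.Kernel in
theorem statement6_general {E : Type*} [TopologicalSpace E] [MeasurableSpace E]
    (U : Kernel E E)
    (hsub : ∀ x : E, U x Set.univ ≤ 1)
    (hFeller : ∀ f : E → ℝ, Measurable f → (∃ C : ℝ, ∀ x, |f x| ≤ C) →
      Continuous (fun x => ∫ y, f y ∂(U x)))
    (hirr : ∀ D : Set E, IsOpen D → D.Nonempty → ∀ x : E, 0 < U x D)
    (B : Set E) (hB : MeasurableSet B) (hBne : B.Nonempty)
    (habs : ∀ x ∈ B, U x Bᶜ = 0) :
    ∀ x : E, U x Bᶜ = 0 := by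
  have hfin : ∀ x, U x Bᶜ ≠ ∞ := fun x =>
    ((measure_mono (Set.subset_univ _)).trans (hsub x)).trans_lt one_lt_top |>.ne
  have hZ : IsClosed {x | U x Bᶜ = 0} :=
    isClosed_setOf_measure_eq_zero hfin
      (IsStrongFeller.continuous_measure_toReal hFeller hB.compl)
  obtain ⟨b, hb⟩ := hBne
  have hZb : U b {x | U x Bᶜ = 0}ᶜ = 0 :=
    measure_mono_null (Set.compl_subset_compl.mpr habs) (habs b hb)
  exact Set.eq_univ_iff_forall.mp (IsTopologicallyIrreducible.eq_univ_of_isClosed hirr hZ hZb)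

/-- Let `E` be a topological space with its Borel σ-algebra and `U` a
sub-Markovian kernel on `E` which is strong Feller (`U f` is continuous for every bounded
measurable `f`) and topologically irreducible (`U 1_D(x) > 0` for every nonempty open `D`
and every `x`). If `B` is a nonempty Borel set with `U 1_{E∖B} = 0` on `B`, then
`U 1_{E∖B} = 0` everywhere. -/
theorem statement6 {E : Type*} [TopologicalSpace E] [MeasurableSpace E] [BorelSpace E]
    (U : Kernel E E)
    (hsub : ∀ x : E, U x Set.univ ≤ 1)
    (hFeller : ∀ f : E → ℝ, Measurable f → (∃ C : ℝ, ∀ x, |f x| ≤ C) →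
      Continuous (fun x => ∫ y, f y ∂(U x)))
    (hirr : ∀ D : Set E, IsOpen D → D.Nonempty → ∀ x : E, 0 < U x D)
    (B : Set E) (hB : MeasurableSet B) (hBne : B.Nonempty)
    (habs : ∀ x ∈ B, U x Bᶜ = 0) :
    ∀ x : E, U x Bᶜ = 0 :=
  statement6_general U hsub hFeller hirr B hB hBne habs
end

section
/- Let u : E → ℝ be measurable with P_t|u| < ∞ pointwise for all t ≥ 0. Then for every x ∈ E, Var^{ℙ^x}((M_t · u(X_t))_{t≥0}) = V^{(Q_t)}(u)(x), where V^{(Q_t)}(u) is the variation of u computed with the semigroup (Q_t) in place of (P_t). -/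
open MeasureTheory ProbabilityTheory ENNReal Filter
open scoped NNReal

/-- Let `(M_t)` be an adapted `[0,1]`-valued multiplicative-functional-type
process with killed semigroup `(Q_t)`, i.e. `𝔼^x[M_{s+t} f(X_{s+t}) | 𝒢_s] = M_s (Q_t f)(X_s)`
a.s. and `𝔼^x[M_t f(X_t)] = Q_t f(x)`. Then for every measurable `u` with `P_t|u| < ∞`
pointwise and every `x`, `Var^{ℙ^x}((M_t u(X_t))_t) = V^{(Q_t)}(u)(x)`. -/
theorem statement8 {E : Type*} [MeasurableSpace E]
    (S Q : SubMarkovSemigroup E)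
    {Ω : Type*} {mΩ : MeasurableSpace Ω} (𝒢 : Filtration ℝ≥0 mΩ)
    (X : ℝ≥0 → Ω → E) (Px : E → Measure Ω)
    (hAdapted : ∀ t : ℝ≥0, @Measurable Ω E (𝒢 t) _ (X t))
    (hProb : ∀ x, IsProbabilityMeasure (Px x))
    (hStart : ∀ x, Px x {ω | X 0 ω = x} = 1)
    (M : ℝ≥0 → Ω → ℝ)
    (hMadapted : ∀ t : ℝ≥0, @Measurable Ω ℝ (𝒢 t) _ (M t))
    (hM01 : ∀ (t : ℝ≥0) (ω : Ω), M t ω ∈ Set.Icc (0 : ℝ) 1)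
    (hMF : ∀ (x : E) (s t : ℝ≥0) (f : E → ℝ), Measurable f →
      (∀ (r : ℝ≥0) (y : E), Integrable f (S.P r y)) →
      (Px x)[(fun ω => M (s + t) ω * f (X (s + t) ω)) | 𝒢 s]
        =ᵐ[Px x] fun ω => M s ω * Q.act t f (X s ω))
    (hQexp : ∀ (x : E) (t : ℝ≥0) (f : E → ℝ), Measurable f →
      (∀ (r : ℝ≥0) (y : E), Integrable f (S.P r y)) →
      ∫ ω, M t ω * f (X t ω) ∂(Px x) = Q.act t f x)
    (u : E → ℝ) (hu : Measurable u)
    (hint : ∀ (t : ℝ≥0) (x : E), Integrable u (S.P t x)) :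
    ∀ x : E, quasiVar 𝒢 (Px x) (fun t ω => M t ω * u (X t ω))
      = ⨆ τ : FinPartition, ENNReal.ofReal (Q.V u τ x) := by
  intro x
  haveI := hProb x
  have hXm : ∀ t : ℝ≥0, Measurable (X t) := fun t => (hAdapted t).mono (𝒢.le t) le_rfl
  have hMm : ∀ t : ℝ≥0, Measurable (M t) := fun t => (hMadapted t).mono (𝒢.le t) le_rfl
  have hMint : ∀ t : ℝ≥0, Integrable (M t) (Px x) := fun t =>
    (integrable_const (1 : ℝ)).mono' (hMm t).aestronglyMeasurable
      (ae_of_all _ fun ω => by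
        rw [Real.norm_eq_abs, abs_of_nonneg (hM01 t ω).1]; exact (hM01 t ω).2)
  -- `Q.P 0` is the identity kernel
  have hQ0 : ∀ y, Q.act 0 u y = u y := by
    intro y
    have hdirac : Q.P 0 y = Measure.dirac y := by
      ext A hA
      have h := Q.map_zero (A.indicator 1) (measurable_one.indicator hA) y
      rw [lintegral_indicator_one hA] at h
      rw [h, Measure.dirac_apply' y hA]
    rw [SubMarkovSemigroup.act, hdirac, integral_dirac' u y hu.stronglyMeasurable]
  -- integrability of `Z t = M t * u (X t)`
  have hZint : ∀ t : ℝ≥0, Integrable (fun ω => M t ω * u (X t ω)) (Px x) := by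
    intro t
    by_cases h : Integrable (fun ω => M t ω * u (X t ω)) (Px x)
    · exact h
    · have h1 := hMF x t 0 u hu hint
      simp only [add_zero] at h1
      rw [condExp_of_not_integrable h] at h1
      have h2 : (fun ω => M t ω * u (X t ω)) =ᵐ[Px x] 0 := by
        filter_upwards [h1] with ω hω
        simp only [Pi.zero_apply] at hω ⊢
        rw [hQ0 (X t ω)] at hω
        exact hω.symm
      exact (integrable_zero _ _ _).congr h2.symm
  -- `Q.P t x` is a pushforward of `Px x` with density `M t`
  have hmap : ∀ t : ℝ≥0, Q.P t x
      = (((Px x).withDensity fun ω => ((M t ω).toNNReal : ℝ≥0∞)).map (X t)) := by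
    intro t
    ext A hA
    rw [Measure.map_apply (hXm t) hA, withDensity_apply _ ((hXm t) hA)]
    have hind : Measurable (A.indicator (1 : E → ℝ)) := measurable_one.indicator hA
    have hindint : ∀ (r : ℝ≥0) (y : E), Integrable (A.indicator (1 : E → ℝ)) (S.P r y) := by
      intro r y
      haveI : IsFiniteMeasure (S.P r y) :=
        ⟨lt_of_le_of_lt (S.subMarkov r y) one_lt_top⟩
      exact (integrable_const (1 : ℝ)).indicator hA
    have h1 := hQexp x t _ hind hindint
    have h3 : (fun ω => M t ω * (A.indicator (1 : E → ℝ)) (X t ω))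
        = (X t ⁻¹' A).indicator (M t) := by
      funext ω
      by_cases hω : X t ω ∈ A <;> simp [Set.indicator, hω]
    rw [h3] at h1
    have h2 : Q.act t (A.indicator (1 : E → ℝ)) x = (Q.P t x A).toReal := by
      rw [SubMarkovSemigroup.act, integral_indicator_one hA]
      rfl
    rw [h2] at h1
    have hfin : Q.P t x A ≠ ∞ :=
      (lt_of_le_of_lt (le_trans (measure_mono (Set.subset_univ A)) (Q.subMarkov t x))
        one_lt_top).ne
    rw [← ENNReal.ofReal_toReal hfin, ← h1,
      ofReal_integral_eq_lintegral_ofReal ((hMint t).indicator ((hXm t) hA))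
        (ae_of_all _ fun ω => Set.indicator_nonneg (fun ω' _ => (hM01 t ω').1) ω)]
    have h5 : (fun ω => ENNReal.ofReal ((X t ⁻¹' A).indicator (M t) ω))
        = (X t ⁻¹' A).indicator fun ω => ((M t ω).toNNReal : ℝ≥0∞) := by
      funext ω
      by_cases hω : ω ∈ X t ⁻¹' A <;> simp [Set.indicator, hω, ENNReal.ofReal]
    rw [h5]
    exact lintegral_indicator ((hXm t) hA) _
  -- `Q.act` on arbitrary measurable functions, as an expectation under `Px x`
  have hB : ∀ (t : ℝ≥0) (f : E → ℝ), Measurable f →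
      Q.act t f x = ∫ ω, M t ω * f (X t ω) ∂(Px x) := by
    intro t f hf
    rw [SubMarkovSemigroup.act, hmap t,
      integral_map (hXm t).aemeasurable hf.stronglyMeasurable.aestronglyMeasurable,
      integral_withDensity_eq_integral_smul (hMm t).real_toNNReal]
    refine integral_congr_ae (ae_of_all _ fun ω => ?_)
    simp only [NNReal.smul_def, smul_eq_mul, Real.coe_toNNReal _ (hM01 t ω).1]
  -- measurability of `Q.act t u`
  have hQactMeas : ∀ t : ℝ≥0, Measurable (Q.act t u) := by
    intro t
    haveI : IsFiniteKernel (Q.P t) := ⟨⟨1, one_lt_top, fun y => Q.subMarkov t y⟩⟩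
    exact (MeasureTheory.StronglyMeasurable.integral_kernel_prod_right (κ := Q.P t)
      (f := fun _ y => u y) ((hu.comp measurable_snd).stronglyMeasurable)).measurable
  -- main computation for a fixed partition
  have key : ∀ τ : FinPartition,
      (∫ ω, ((∑ i : Fin τ.n,
          |((Px x)[(fun ω' => M (τ.t i.succ) ω' * u (X (τ.t i.succ) ω')
              - M (τ.t i.castSucc) ω' * u (X (τ.t i.castSucc) ω')) | 𝒢 (τ.t i.castSucc)]) ω|)
        + |M (τ.t (Fin.last τ.n)) ω * u (X (τ.t (Fin.last τ.n)) ω)|) ∂(Px x))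
      = Q.V u τ x := by
    intro τ
    have habs : ∀ i : Fin τ.n,
        (fun ω => |((Px x)[(fun ω' => M (τ.t i.succ) ω' * u (X (τ.t i.succ) ω')
            - M (τ.t i.castSucc) ω' * u (X (τ.t i.castSucc) ω')) | 𝒢 (τ.t i.castSucc)]) ω|)
        =ᵐ[Px x] fun ω => M (τ.t i.castSucc) ω
            * |u (X (τ.t i.castSucc) ω)
                - Q.act (τ.t i.succ - τ.t i.castSucc) u (X (τ.t i.castSucc) ω)| := by
      intro i
      have e : (fun ω' => M (τ.t i.succ) ω' * u (X (τ.t i.succ) ω')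
            - M (τ.t i.castSucc) ω' * u (X (τ.t i.castSucc) ω'))
          = (fun ω' => M (τ.t i.succ) ω' * u (X (τ.t i.succ) ω'))
            - fun ω' => M (τ.t i.castSucc) ω' * u (X (τ.t i.castSucc) ω') := rfl
      rw [e]
      have h1 := condExp_sub (m := 𝒢 (τ.t i.castSucc)) (μ := Px x)
        (hZint (τ.t i.succ)) (hZint (τ.t i.castSucc))
      have hle : τ.t i.castSucc ≤ τ.t i.succ := τ.mono (Fin.castSucc_le_succ i)
      have hab : τ.t i.castSucc + (τ.t i.succ - τ.t i.castSucc) = τ.t i.succ :=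
        add_tsub_cancel_of_le hle
      have h2 := hMF x (τ.t i.castSucc) (τ.t i.succ - τ.t i.castSucc) u hu hint
      rw [hab] at h2
      have h3 : (Px x)[(fun ω => M (τ.t i.castSucc) ω * u (X (τ.t i.castSucc) ω))
            | 𝒢 (τ.t i.castSucc)]
          = fun ω => M (τ.t i.castSucc) ω * u (X (τ.t i.castSucc) ω) :=
        condExp_of_stronglyMeasurable (𝒢.le _)
          ((hMadapted _).mul (hu.comp (hAdapted _))).stronglyMeasurable (hZint _)
      filter_upwards [h1, h2] with ω hω1 hω2
      simp only [hω1, Pi.sub_apply, hω2, h3]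
      rw [← mul_sub, abs_mul, abs_of_nonneg (hM01 _ ω).1, abs_sub_comm]
    rw [integral_add (integrable_finset_sum _ fun i _ => integrable_condExp.abs)
        (hZint _).abs,
      integral_finset_sum _ fun i _ => integrable_condExp.abs]
    unfold SubMarkovSemigroup.V
    congr 1
    · refine Finset.sum_congr rfl fun i _ => ?_
      rw [integral_congr_ae (habs i)]
      exact (hB _ _ ((hu.sub (hQactMeas _)).abs)).symm
    · have e2 : (fun ω => |M (τ.t (Fin.last τ.n)) ω * u (X (τ.t (Fin.last τ.n)) ω)|)
          = fun ω => M (τ.t (Fin.last τ.n)) ω * |u (X (τ.t (Fin.last τ.n)) ω)| :=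
        funext fun ω => by rw [abs_mul, abs_of_nonneg (hM01 _ ω).1]
      rw [e2]
      exact (hB _ _ hu.abs).symm
  simp only [quasiVar]
  exact iSup_congr fun τ => by rw [key τ]
end

section
/- Let u : E → ℝ be measurable with P_t|u| < ∞ pointwise for all t ≥ 0, let α ≥ 0 and let c : E → [0,∞] be measurable such that: (1) U_α(|u| + c)(x) < ∞ for every x; (2) limsup_{t→∞} e^{-αt} P_t|u|(x) < ∞ for every x; (3) |P_t u − u| ≤ t·c pointwise for every t ≥ 0; (4) for every x, limsup_n 2^{-n} Σ_{k=1}^{n·2^n} e^{-α(k−1)/2^n} P_{(k−1)/2^n}(|u| + c)(x) < ∞ (in particular this holds when the left-endpoint dyadic Riemann sums of t ↦ e^{-αt} P_t(|u| + c)(x) converge to U_α(|u| + c)(x)). Then sup_n V^α_{τ_n}(u)(x) < ∞ for every x ∈ E, where τ_n := {k/2^n : 0 ≤ k ≤ n·2^n}. -/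
open MeasureTheory ProbabilityTheory ENNReal Filter
open scoped NNReal

/-- The resolvent `U_α f(x) = ∫_0^∞ e^{-αt} P_t f(x) dt`. -/
noncomputable def SubMarkovSemigroup.resolvent {E : Type*} [MeasurableSpace E]
    (S : SubMarkovSemigroup E) (α : ℝ) (f : E → ℝ≥0∞) (x : E) : ℝ≥0∞ :=
  ∫⁻ t in Set.Ioi (0 : ℝ), ENNReal.ofReal (Real.exp (-α * t)) * ∫⁻ y, f y ∂(S.P t.toNNReal x)

/-- `g` is `α`-supermedian if `e^{-αt} P_t g ≤ g` for all `t`; it is `α`-excessive if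
moreover `e^{-αt} P_t g → g` pointwise as `t ↓ 0`. -/
def SubMarkovSemigroup.IsExcessive {E : Type*} [MeasurableSpace E]
    (S : SubMarkovSemigroup E) (α : ℝ) (g : E → ℝ≥0∞) : Prop :=
  Measurable g ∧
  (∀ (t : ℝ≥0) (x : E),
    ENNReal.ofReal (Real.exp (-α * t)) * ∫⁻ y, g y ∂(S.P t x) ≤ g x) ∧
  (∀ x : E, Filter.Tendsto
    (fun t : ℝ≥0 => ENNReal.ofReal (Real.exp (-α * t)) * ∫⁻ y, g y ∂(S.P t x))
    (nhdsWithin 0 (Set.Ioi 0)) (nhds (g x)))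

/-- `V^α_τ(u) = Σ_{i=1}^n P^α_{t_{i-1}} |u - P^α_{t_i - t_{i-1}} u| + P^α_{t_n}|u|`,
where `P^α_t = e^{-αt} P_t`. -/
noncomputable def SubMarkovSemigroup.Valpha {E : Type*} [MeasurableSpace E]
    (S : SubMarkovSemigroup E) (α : ℝ) (u : E → ℝ) (τ : FinPartition) (x : E) : ℝ :=
  (∑ i : Fin τ.n, Real.exp (-α * τ.t i.castSucc) * S.act (τ.t i.castSucc)
      (fun y => |u y - Real.exp (-α * ((τ.t i.succ : ℝ) - (τ.t i.castSucc : ℝ)))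
        * S.act (τ.t i.succ - τ.t i.castSucc) u y|) x)
  + Real.exp (-α * τ.t (Fin.last τ.n)) * S.act (τ.t (Fin.last τ.n)) (fun y => |u y|) x

/-- The dyadic partition `τ_n = {k/2^n : 0 ≤ k ≤ n·2^n}`. -/
noncomputable def dyadicPartition (n : ℕ) : FinPartition where
  n := n * 2 ^ n
  t := fun i => (i : ℕ) / (2 ^ n : ℝ≥0)
  mono := by
    intro i j hij
    have : ((i : ℕ) : ℝ≥0) ≤ ((j : ℕ) : ℝ≥0) := by exact_mod_cast hij
    exact div_le_div_of_nonneg_right this (by positivity)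
  first := by simp


/-!
With mesh `δ = 2^{-n}`, pointwise `|u - e^{-αδ} P_δ u| ≤ |P_δ u - u| + (1 - e^{-αδ}) |P_δ u|
≤ δ c + αδ P_δ|u|`. Applying `P^α_{t_k}` and the semigroup property bounds the `k`-th term of
`V^α_{τ_n}(u)` by `δ (P^α_{t_k} c + α e^{αδ} P^α_{t_{k+1}} |u|)`; after shifting the index,
`V^α_{τ_n}(u)(x) ≤ (1 + α e^α) (R_n + P^α_n |u|(x))`, where `R_n` is the left-endpoint dyadic
Riemann sum of `t ↦ P^α_t (|u| + c)(x)`. By (4) and (2) the right-hand side is eventually bounded,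
and each `V^α_{τ_n}(u)(x)` is finite.
-/

lemma Real.abs_sub_exp_neg_mul_le {r : ℝ} (hr : 0 ≤ r) (v a : ℝ) :
    |v - Real.exp (-r) * a| ≤ |a - v| + r * |a| := by
  have h_one_sub : 0 ≤ 1 - Real.exp (-r) := by
    linarith [Real.exp_le_one_iff.2 (neg_nonpos.2 hr)]
  have h_one_sub_le : 1 - Real.exp (-r) ≤ r := by linarith [Real.one_sub_le_exp_neg r]
  calc |v - Real.exp (-r) * a| = |-(a - v) + (1 - Real.exp (-r)) * a| := by ring_nf
    _ ≤ |a - v| + (1 - Real.exp (-r)) * |a| := by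
      simpa only [abs_neg, abs_mul, abs_of_nonneg h_one_sub] using
        abs_add_le (-(a - v)) ((1 - Real.exp (-r)) * a)
    _ ≤ |a - v| + r * |a| := by gcongr

lemma Fin.sum_succ_le_sum_castSucc_add_last {M : Type*} [AddCommMonoid M] [PartialOrder M]
    [CanonicallyOrderedAdd M] {n : ℕ} (w : Fin (n + 1) → M) :
    ∑ i : Fin n, w i.succ ≤ ∑ i : Fin n, w i.castSucc + w (Fin.last n) := by
  rw [← Fin.sum_univ_castSucc, Fin.sum_univ_succ]
  exact le_add_self

lemma ENNReal.iSup_lt_top_of_eventually_le {f : ℕ → ℝ≥0∞} (hf : ∀ n, f n ≠ ∞) {b : ℝ≥0∞}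
    (hb : b ≠ ∞) (h : ∀ᶠ n in atTop, f n ≤ b) : ⨆ n, f n < ∞ := by
  obtain ⟨N, hN⟩ := eventually_atTop.1 h
  have h_bound : ∀ n, f n ≤ max (∑ m ∈ Finset.range N, f m) b := fun n => by
    rcases lt_or_ge n N with hn | hn
    · exact le_max_of_le_left (Finset.single_le_sum (fun _ _ => zero_le)
        (Finset.mem_range.2 hn))
    · exact le_max_of_le_right (hN n hn)
  exact (iSup_le h_bound).trans_lt
    (max_lt (ENNReal.sum_lt_top.2 fun m _ => (hf m).lt_top) hb.lt_top)

lemma MeasureTheory.ofReal_abs_integral_le {β : Type*} [MeasurableSpace β] (μ : Measure β)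
    (f : β → ℝ) : ENNReal.ofReal |∫ y, f y ∂μ| ≤ ∫⁻ y, ENNReal.ofReal |f y| ∂μ := by
  simpa only [← Real.enorm_eq_ofReal_abs] using enorm_integral_le_lintegral_enorm f

lemma MeasureTheory.ofReal_integral_le_lintegral_ofReal_abs {β : Type*} [MeasurableSpace β]
    (μ : Measure β) (f : β → ℝ) : ENNReal.ofReal (∫ y, f y ∂μ) ≤ ∫⁻ y, ENNReal.ofReal |f y| ∂μ :=
  (ENNReal.ofReal_le_ofReal (le_abs_self _)).trans (ofReal_abs_integral_le μ f)

lemma dyadicPartition_t_succ_sub (n : ℕ) (i : Fin (dyadicPartition n).n) :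
    (dyadicPartition n).t i.succ - (dyadicPartition n).t i.castSucc = (2 ^ n)⁻¹ := by
  change ((i.succ : ℕ) : ℝ≥0) / 2 ^ n - ((i.castSucc : ℕ) : ℝ≥0) / 2 ^ n = (2 ^ n)⁻¹
  rw [Fin.val_succ, Fin.val_castSucc, Nat.cast_add, Nat.cast_one, add_div, add_tsub_cancel_left,
    one_div]

lemma dyadicPartition_t_last (n : ℕ) : (dyadicPartition n).t (Fin.last _) = n := by
  simp [dyadicPartition]

namespace SubMarkovSemigroup

variable {E : Type*} [MeasurableSpace E] (S : SubMarkovSemigroup E)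

/-- `P^α_t f(x) = e^{-αt} P_t f(x)` for `f ≥ 0`. -/
noncomputable def discountedLIntegral (α : ℝ) (t : ℝ≥0) (f : E → ℝ≥0∞) (x : E) : ℝ≥0∞ :=
  ENNReal.ofReal (Real.exp (-α * t)) * ∫⁻ y, f y ∂(S.P t x)

lemma discountedLIntegral_mono (α : ℝ) (t : ℝ≥0) {f g : E → ℝ≥0∞} (hfg : f ≤ g) (x : E) :
    S.discountedLIntegral α t f x ≤ S.discountedLIntegral α t g x :=
  mul_le_mul_right (lintegral_mono hfg) _

noncomputable def dyadicRiemannSum (α : ℝ) (f : E → ℝ≥0∞) (n : ℕ) (x : E) : ℝ≥0∞ :=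
  ((2 : ℝ≥0∞) ^ n)⁻¹ * ∑ k ∈ Finset.range (n * 2 ^ n),
    S.discountedLIntegral α ((k : ℝ≥0) / 2 ^ n) f x

variable {α : ℝ} {u : E → ℝ} {c : E → ℝ≥0∞}

lemma ofReal_abs_sub_discount_act_le (hα : 0 ≤ α) {δ : ℝ≥0} {y : E}
    (h3 : ENNReal.ofReal |S.act δ u y - u y| ≤ δ * c y) :
    ENNReal.ofReal |u y - Real.exp (-α * δ) * S.act δ u y| ≤
      δ * c y + ENNReal.ofReal (α * δ) * ∫⁻ z, ENNReal.ofReal |u z| ∂(S.P δ y) := by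
  have hαδ : 0 ≤ α * δ := mul_nonneg hα δ.coe_nonneg
  calc ENNReal.ofReal |u y - Real.exp (-α * δ) * S.act δ u y|
      ≤ ENNReal.ofReal (|S.act δ u y - u y| + α * δ * |S.act δ u y|) := by
        rw [neg_mul]
        exact ENNReal.ofReal_le_ofReal (Real.abs_sub_exp_neg_mul_le hαδ _ _)
    _ ≤ ENNReal.ofReal |S.act δ u y - u y| +
          ENNReal.ofReal (α * δ) * ENNReal.ofReal |S.act δ u y| := by
        rw [← ENNReal.ofReal_mul hαδ]
        exact ENNReal.ofReal_add_le
    _ ≤ _ := add_le_add h3 (mul_le_mul_right (ofReal_abs_integral_le (S.P δ y) u) _)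

lemma ofReal_discount_act_step_le (hα : 0 ≤ α) (hu : Measurable u) {δ : ℝ≥0}
    (h3 : ∀ y, ENNReal.ofReal |S.act δ u y - u y| ≤ δ * c y) (s : ℝ≥0) (x : E) :
    ENNReal.ofReal (Real.exp (-α * s) *
        S.act s (fun y => |u y - Real.exp (-α * δ) * S.act δ u y|) x) ≤
      δ * (S.discountedLIntegral α s c x + ENNReal.ofReal (α * Real.exp (α * δ)) *
        S.discountedLIntegral α (s + δ) (fun y => ENNReal.ofReal |u y|) x) := by
  have hu_abs : Measurable fun z => ENNReal.ofReal |u z| := hu.abs.ennreal_ofReal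
  have h_int : ∫⁻ y, ENNReal.ofReal |(|u y - Real.exp (-α * δ) * S.act δ u y|)| ∂(S.P s x) ≤
      δ * ∫⁻ y, c y ∂(S.P s x) +
        ENNReal.ofReal (α * δ) * ∫⁻ y, ENNReal.ofReal |u y| ∂(S.P (s + δ) x) :=
    calc _ ≤ ∫⁻ y, (δ * c y + ENNReal.ofReal (α * δ) *
            ∫⁻ z, ENNReal.ofReal |u z| ∂(S.P δ y)) ∂(S.P s x) :=
          lintegral_mono fun y => by
            rw [abs_abs]
            exact S.ofReal_abs_sub_discount_act_le hα (h3 y)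
      _ = _ := by
        rw [lintegral_add_right _ (hu_abs.lintegral_kernel.const_mul _),
          lintegral_const_mul' _ _ ENNReal.coe_ne_top,
          lintegral_const_mul _ hu_abs.lintegral_kernel, S.map_add s δ _ hu_abs x]
  -- The discount moves to `s + δ`, the time at which `P_s (P_δ |u|) = P_{s+δ} |u|` lives.
  have h_exp : ENNReal.ofReal (Real.exp (-α * s)) * ENNReal.ofReal (α * δ) =
      δ * ENNReal.ofReal (α * Real.exp (α * δ)) *
        ENNReal.ofReal (Real.exp (-α * ((s + δ : ℝ≥0) : ℝ))) := by
    have h_split : Real.exp (α * δ) * Real.exp (-α * ((s + δ : ℝ≥0) : ℝ)) =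
        Real.exp (-α * s) := by
      rw [← Real.exp_add]
      push_cast
      ring_nf
    rw [← ENNReal.ofReal_mul (Real.exp_nonneg _), ← ENNReal.ofReal_coe_nnreal,
      ← ENNReal.ofReal_mul δ.coe_nonneg,
      ← ENNReal.ofReal_mul (mul_nonneg δ.coe_nonneg (mul_nonneg hα (Real.exp_nonneg _)))]
    congr 1
    linear_combination (-(α * δ)) * h_split
  calc _ = ENNReal.ofReal (Real.exp (-α * s)) *
        ENNReal.ofReal (S.act s (fun y => |u y - Real.exp (-α * δ) * S.act δ u y|) x) :=
        ENNReal.ofReal_mul (Real.exp_nonneg _)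
    _ ≤ ENNReal.ofReal (Real.exp (-α * s)) * (δ * ∫⁻ y, c y ∂(S.P s x) +
        ENNReal.ofReal (α * δ) * ∫⁻ y, ENNReal.ofReal |u y| ∂(S.P (s + δ) x)) :=
        mul_le_mul_right ((ofReal_integral_le_lintegral_ofReal_abs (S.P s x) _).trans h_int) _
    _ = δ * S.discountedLIntegral α s c x + (ENNReal.ofReal (Real.exp (-α * s)) *
        ENNReal.ofReal (α * δ)) * ∫⁻ y, ENNReal.ofReal |u y| ∂(S.P (s + δ) x) := by
        rw [discountedLIntegral]
        ring
    _ = _ := by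
        rw [h_exp]
        simp only [discountedLIntegral]
        ring

lemma ofReal_Valpha_le (hα : 0 ≤ α) (hu : Measurable u)
    (h3 : ∀ (t : ℝ≥0) (y : E), ENNReal.ofReal |S.act t u y - u y| ≤ t * c y)
    (τ : FinPartition) (x : E) :
    ENNReal.ofReal (S.Valpha α u τ x) ≤
      ∑ i : Fin τ.n, ((τ.t i.succ - τ.t i.castSucc : ℝ≥0) : ℝ≥0∞) *
          (S.discountedLIntegral α (τ.t i.castSucc) c x +
            ENNReal.ofReal (α * Real.exp (α * (τ.t i.succ - τ.t i.castSucc : ℝ≥0))) *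
              S.discountedLIntegral α (τ.t i.succ) (fun y => ENNReal.ofReal |u y|) x) +
        S.discountedLIntegral α (τ.t (Fin.last τ.n)) (fun y => ENNReal.ofReal |u y|) x := by
  refine ENNReal.ofReal_add_le.trans (add_le_add ?_ ?_)
  · refine (ENNReal.ofReal_sum_of_nonneg fun i _ => ?_).trans_le (Finset.sum_le_sum fun i _ => ?_)
    · exact mul_nonneg (Real.exp_nonneg _) (integral_nonneg fun _ => abs_nonneg _)
    have h_le : τ.t i.castSucc ≤ τ.t i.succ := τ.mono (Fin.castSucc_le_succ i)
    have h_step := S.ofReal_discount_act_step_le hα hu (h3 (τ.t i.succ - τ.t i.castSucc))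
      (τ.t i.castSucc) x
    rw [add_tsub_cancel_of_le h_le] at h_step
    rwa [NNReal.coe_sub h_le] at h_step ⊢
  · rw [ENNReal.ofReal_mul (Real.exp_nonneg _), discountedLIntegral]
    refine mul_le_mul_right ((ofReal_integral_le_lintegral_ofReal_abs (S.P _ x) _).trans_eq ?_) _
    simp_rw [abs_abs]

lemma ofReal_Valpha_dyadicPartition_le (hα : 0 ≤ α) (hu : Measurable u)
    (h3 : ∀ (t : ℝ≥0) (y : E), ENNReal.ofReal |S.act t u y - u y| ≤ t * c y) (n : ℕ) (x : E) :
    ENNReal.ofReal (S.Valpha α u (dyadicPartition n) x) ≤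
      (1 + ENNReal.ofReal (α * Real.exp α)) *
        (S.dyadicRiemannSum α (fun y => ENNReal.ofReal |u y| + c y) n x +
          S.discountedLIntegral α n (fun y => ENNReal.ofReal |u y|) x) := by
  set τ := dyadicPartition n
  set δ : ℝ≥0 := (2 ^ n)⁻¹
  set K := ENNReal.ofReal (α * Real.exp α)
  set R := S.dyadicRiemannSum α (fun y => ENNReal.ofReal |u y| + c y) n x
  set absU : E → ℝ≥0∞ := fun y => ENNReal.ofReal |u y|
  set L := S.discountedLIntegral α n absU x
  have hδ_le_one : δ ≤ 1 := inv_le_one_of_one_le₀ (one_le_pow₀ one_le_two)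
  have hK : ENNReal.ofReal (α * Real.exp (α * δ)) ≤ K :=
    ENNReal.ofReal_le_ofReal (mul_le_mul_of_nonneg_left
      (Real.exp_le_exp.2 (mul_le_of_le_one_right hα hδ_le_one)) hα)
  have h_riemann : ∀ f ≤ fun y => ENNReal.ofReal |u y| + c y,
      δ * ∑ i : Fin τ.n, S.discountedLIntegral α (τ.t i.castSucc) f x ≤ R := by
    intro f hf
    have hδ : ((δ : ℝ≥0) : ℝ≥0∞) = ((2 : ℝ≥0∞) ^ n)⁻¹ := by
      rw [ENNReal.coe_inv (by positivity), ENNReal.coe_pow, ENNReal.coe_ofNat]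
    rw [hδ]
    simp only [R, dyadicRiemannSum, ← Fin.sum_univ_eq_sum_range]
    gcongr
    exact Finset.sum_le_sum fun i _ => S.discountedLIntegral_mono α _ hf x
  have h_shift := Fin.sum_succ_le_sum_castSucc_add_last
    (fun i => S.discountedLIntegral α (τ.t i) absU x)
  calc ENNReal.ofReal (S.Valpha α u τ x)
      ≤ ∑ i : Fin τ.n, δ * (S.discountedLIntegral α (τ.t i.castSucc) c x +
          ENNReal.ofReal (α * Real.exp (α * δ)) * S.discountedLIntegral α (τ.t i.succ) absU x)
          + L := by
        simpa only [τ, dyadicPartition_t_succ_sub, dyadicPartition_t_last]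
          using S.ofReal_Valpha_le hα hu h3 τ x
    _ = δ * ∑ i : Fin τ.n, S.discountedLIntegral α (τ.t i.castSucc) c x +
          ENNReal.ofReal (α * Real.exp (α * δ)) *
            (δ * ∑ i : Fin τ.n, S.discountedLIntegral α (τ.t i.succ) absU x) + L := by
        simp only [mul_add, Finset.mul_sum, Finset.sum_add_distrib, mul_left_comm]
    _ ≤ R + K * (δ * ∑ i : Fin τ.n, S.discountedLIntegral α (τ.t i.castSucc) absU x
          + δ * L) + L := by
        rw [← mul_add]
        gcongr
        · exact h_riemann c fun y => le_add_self
        · simpa only [τ, dyadicPartition_t_last] using h_shift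
    _ ≤ R + K * (R + L) + L := by
        gcongr
        · exact h_riemann absU fun y => le_self_add
        · exact mul_le_of_le_one_left' (by exact_mod_cast hδ_le_one)
    _ = (1 + K) * (R + L) := by ring

end SubMarkovSemigroup

theorem statement9_general {E : Type*} [MeasurableSpace E] (S : SubMarkovSemigroup E)
    (u : E → ℝ) (hu : Measurable u)
    (α : ℝ) (hα : 0 ≤ α) (c : E → ℝ≥0∞)
    (h2 : ∀ x : E, Filter.limsup (fun t : ℝ≥0 =>
        ENNReal.ofReal (Real.exp (-α * t)) * ∫⁻ y, ENNReal.ofReal |u y| ∂(S.P t x))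
      Filter.atTop < ∞)
    (h3 : ∀ (t : ℝ≥0) (x : E),
      ENNReal.ofReal |S.act t u x - u x| ≤ (t : ℝ≥0∞) * c x)
    (h4 : ∀ x : E, Filter.limsup (fun n : ℕ =>
        ((2 : ℝ≥0∞) ^ n)⁻¹ * ∑ k ∈ Finset.range (n * 2 ^ n),
          ENNReal.ofReal (Real.exp (-α * ((k : ℝ) / 2 ^ n))) *
            ∫⁻ y, (ENNReal.ofReal |u y| + c y) ∂(S.P ((k : ℝ≥0) / 2 ^ n) x))
      Filter.atTop < ∞) :
    ∀ x : E, (⨆ n : ℕ, ENNReal.ofReal (S.Valpha α u (dyadicPartition n) x)) < ∞ := by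
  intro x
  set K := 1 + ENNReal.ofReal (α * Real.exp α)
  set R := fun n => S.dyadicRiemannSum α (fun y => ENNReal.ofReal |u y| + c y) n x
  set L := fun n : ℕ => S.discountedLIntegral α n (fun y => ENNReal.ofReal |u y|) x
  have hR : limsup R atTop < ∞ := by
    simpa [R, SubMarkovSemigroup.dyadicRiemannSum, SubMarkovSemigroup.discountedLIntegral]
      using h4 x
  have hL : limsup L atTop < ∞ :=
    tendsto_natCast_atTop_atTop.limsup_comp_le_limsup.trans_lt (h2 x)
  have hR_ev := eventually_lt_of_limsup_lt (ENNReal.lt_add_right hR.ne one_ne_zero)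
  have hL_ev := eventually_lt_of_limsup_lt (ENNReal.lt_add_right hL.ne one_ne_zero)
  refine ENNReal.iSup_lt_top_of_eventually_le (fun n => ENNReal.ofReal_ne_top)
    (b := K * ((limsup R atTop + 1) + (limsup L atTop + 1))) (by finiteness) ?_
  filter_upwards [hR_ev, hL_ev] with n hRn hLn
  exact (S.ofReal_Valpha_dyadicPartition_le hα hu h3 n x).trans (by gcongr)

/-- Under conditions (1) `U_α(|u|+c) < ∞`, (2) `limsup_{t→∞} e^{-αt}P_t|u| < ∞`,
(3) `|P_t u - u| ≤ t·c`, and (4) boundedness of the left-endpoint dyadic Riemann sums of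
`t ↦ e^{-αt} P_t(|u|+c)(x)`, one has `sup_n V^α_{τ_n}(u)(x) < ∞` for every `x`, where
`τ_n = {k/2^n : 0 ≤ k ≤ n·2^n}`. -/
theorem statement9 {E : Type*} [MeasurableSpace E] (S : SubMarkovSemigroup E)
    (hJM : ∀ f : E → ℝ≥0∞, Measurable f →
      Measurable (fun p : ℝ≥0 × E => ∫⁻ y, f y ∂(S.P p.1 p.2)))
    (u : E → ℝ) (hu : Measurable u)
    (hint : ∀ (t : ℝ≥0) (x : E), Integrable u (S.P t x))
    (α : ℝ) (hα : 0 ≤ α) (c : E → ℝ≥0∞) (hc : Measurable c)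
    (h1 : ∀ x : E, S.resolvent α (fun y => ENNReal.ofReal |u y| + c y) x < ∞)
    (h2 : ∀ x : E, Filter.limsup (fun t : ℝ≥0 =>
        ENNReal.ofReal (Real.exp (-α * t)) * ∫⁻ y, ENNReal.ofReal |u y| ∂(S.P t x))
      Filter.atTop < ∞)
    (h3 : ∀ (t : ℝ≥0) (x : E),
      ENNReal.ofReal |S.act t u x - u x| ≤ (t : ℝ≥0∞) * c x)
    (h4 : ∀ x : E, Filter.limsup (fun n : ℕ =>
        ((2 : ℝ≥0∞) ^ n)⁻¹ * ∑ k ∈ Finset.range (n * 2 ^ n),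
          ENNReal.ofReal (Real.exp (-α * ((k : ℝ) / 2 ^ n))) *
            ∫⁻ y, (ENNReal.ofReal |u y| + c y) ∂(S.P ((k : ℝ≥0) / 2 ^ n) x))
      Filter.atTop < ∞) :
    ∀ x : E, (⨆ n : ℕ, ENNReal.ofReal (S.Valpha α u (dyadicPartition n) x)) < ∞ :=
  statement9_general S u hu α hα c h2 h3 h4
end
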